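/- arXiv:2210.07823 — 5 statements merged into one kernel-verified Lean document; each statement's English description precedes it below -/
import Mathlib

section
/- Let α ∈ (1/2,1), η > 0, and let k be a positive integer with 1/(2α−1) ≤ k+1. Then there exist a positive integer l and positive integers n_1 ≤ n_2 ≤ … ≤ n_l such that 2α−1 < (1 + 1/n_1 + 1/(n_1n_2) + … + 1/(n_1n_2⋯n_l)) / (k + 1 + 1/n_1 + 1/(n_1n_2) + … + 1/(n_1n_2⋯n_{l−1})) < 2(α+η)−1. -/
noncomputable def esum : List ℕ → ℝ
  | [] => 0
  | (n :: L) => (1 + esum L) / n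

@[simp] lemma esum_nil : esum [] = 0 := rfl
lemma esum_cons (a : ℕ) (T : List ℕ) : esum (a :: T) = (1 + esum T) / a := rfl

lemma esum_nonneg {L : List ℕ} (h : ∀ y ∈ L, 1 ≤ y) : 0 ≤ esum L := by
  induction L with
  | nil => simp
  | cons a T ih =>
    have ha : (1:ℝ) ≤ a := by exact_mod_cast h a (by simp)
    have hT := ih (fun y hy => h y (List.mem_cons_of_mem _ hy))
    rw [esum_cons]
    positivity

lemma esum_pos {L : List ℕ} (h : ∀ y ∈ L, 1 ≤ y) (hne : L ≠ []) : 0 < esum L := by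
  cases L with
  | nil => exact absurd rfl hne
  | cons a T =>
    have ha : (1:ℝ) ≤ a := by exact_mod_cast h a (by simp)
    have hT := esum_nonneg (fun y hy => h y (List.mem_cons_of_mem _ hy))
    rw [esum_cons]
    positivity

lemma esum_replicate_one (q : ℕ) : esum (List.replicate q 1) = q := by
  induction q with
  | zero => simp
  | succ t ih => rw [List.replicate_succ, esum_cons, ih]; push_cast; ring

lemma esum_replicate {m : ℕ} (hm : 2 ≤ m) (t : ℕ) :
    esum (List.replicate t m) = (1 - ((m:ℝ)⁻¹)^t) / ((m:ℝ) - 1) := by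
  have hm1 : (1:ℝ) < m := by exact_mod_cast hm
  have hm0 : (m:ℝ) ≠ 0 := by positivity
  have hm1' : (m:ℝ) - 1 ≠ 0 := by linarith
  induction t with
  | zero => simp
  | succ t ih =>
    rw [List.replicate_succ, esum_cons, ih]
    field_simp
    rw [pow_succ, mul_sub, mul_one, mul_comm (_ ^ t), ← mul_assoc (m:ℝ), mul_one_div_cancel hm0, one_mul]
    ring

lemma esum_replicate_append {m : ℕ} (hm : 1 ≤ m) (t : ℕ) (L : List ℕ) :
    esum (List.replicate t m ++ L) = esum (List.replicate t m) + esum L * ((m:ℝ)⁻¹)^t := by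
  have hm0 : (m:ℝ) ≠ 0 := by
    have : (1:ℝ) ≤ m := by exact_mod_cast hm
    positivity
  induction t with
  | zero => simp
  | succ t ih =>
    rw [List.replicate_succ, List.cons_append, esum_cons, esum_cons, ih]
    field_simp
    rw [pow_succ, mul_comm (_ ^ t), mul_assoc (esum L), ← mul_assoc (m:ℝ), mul_one_div_cancel hm0, one_mul]
    ring

lemma esum_append_singleton {L : List ℕ} (h : ∀ y ∈ L, 1 ≤ y) {n : ℕ} (hn : 1 ≤ n) :
    esum (L ++ [n]) = esum L + 1 / ((n:ℝ) * (L.prod:ℝ)) := by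
  have hn0 : (n:ℝ) ≠ 0 := by
    have : (1:ℝ) ≤ n := by exact_mod_cast hn
    positivity
  induction L with
  | nil => simp [esum_cons]
  | cons a T ih =>
    have ha : (1:ℝ) ≤ a := by exact_mod_cast h a (by simp)
    have ha0 : (a:ℝ) ≠ 0 := by positivity
    have hp : ((T.prod:ℕ):ℝ) ≠ 0 := by
      have : 0 < T.prod := List.prod_pos (fun y hy => h y (List.mem_cons_of_mem _ hy))
      positivity
    rw [List.cons_append, esum_cons, ih (fun y hy => h y (List.mem_cons_of_mem _ hy)),
      esum_cons, List.prod_cons, Nat.cast_mul]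
    have hP : ((List.map (Nat.cast : ℕ → ℝ) T).prod) ≠ 0 := by push_cast at hp; exact hp
    field_simp
    ring

lemma prod_range_getD (M : List ℕ) (d : ℕ) (j : ℕ) (hj : j ≤ M.length) :
    ∏ i ∈ Finset.range j, ((M.getD i d : ℕ) : ℝ) = ((M.take j).prod : ℕ) := by
  induction j with
  | zero => simp
  | succ j ih =>
    have hj' : j < M.length := hj
    rw [Finset.prod_range_succ, ih (le_of_lt hj'), List.prod_take_succ M j hj',
      List.getD_eq_getElem M d hj']
    push_cast
    ring

lemma sum_inv_prod_take (M : List ℕ) :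
    ∑ j ∈ Finset.range (M.length + 1), (1:ℝ) / ((M.take j).prod : ℕ) = 1 + esum M := by
  induction M with
  | nil => simp
  | cons a T ih =>
    rw [List.length_cons, Finset.sum_range_succ']
    have h1 : ∀ j, ((a :: T).take (j+1)).prod = a * (T.take j).prod := by
      intro j; rw [List.take_succ_cons, List.prod_cons]
    have : ∑ j ∈ Finset.range (T.length + 1), (1:ℝ) / (((a :: T).take (j+1)).prod : ℕ)
        = (1/(a:ℝ)) * ∑ j ∈ Finset.range (T.length + 1), (1:ℝ) / ((T.take j).prod : ℕ) := by
      rw [Finset.mul_sum]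
      refine Finset.sum_congr rfl (fun j _ => ?_)
      rw [h1 j]
      push_cast
      rw [one_div, one_div, one_div, mul_inv]
    rw [this, ih, esum_cons]
    simp
    ring

lemma sum_inv_prod_range (M : List ℕ) (d : ℕ) (J : ℕ) (hJ : J ≤ M.length) :
    ∑ j ∈ Finset.range (J + 1), (1:ℝ) / ∏ i ∈ Finset.range j, ((M.getD i d : ℕ) : ℝ)
      = 1 + esum (M.take J) := by
  have key : ∀ j ∈ Finset.range (J+1),
      (1:ℝ) / ∏ i ∈ Finset.range j, ((M.getD i d : ℕ) : ℝ)
        = (1:ℝ) / (((M.take J).take j).prod : ℕ) := by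
    intro j hj
    have hjJ : j ≤ J := Nat.lt_succ_iff.mp (Finset.mem_range.mp hj)
    rw [prod_range_getD M d j (le_trans hjJ hJ), List.take_take, min_eq_left hjJ]
  rw [Finset.sum_congr rfl key]
  have := sum_inv_prod_take (M.take J)
  rwa [List.length_take, min_eq_left hJ] at this

lemma monotone_getD {M : List ℕ} {d : ℕ} (hs : List.Pairwise (· ≤ ·) M)
    (hd : ∀ y ∈ M, y ≤ d) : Monotone (fun i => M.getD i d) := by
  intro i j hij
  show M.getD i d ≤ M.getD j d
  by_cases hj : j < M.length
  · have hi : i < M.length := lt_of_le_of_lt hij hj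
    simp only [List.getD_eq_getElem M d hi, List.getD_eq_getElem M d hj]
    rcases eq_or_lt_of_le hij with h | h
    · subst h; exact le_refl _
    · exact List.pairwise_iff_get.mp hs ⟨i, hi⟩ ⟨j, hj⟩ h
  · rw [List.getD_eq_default M d (not_lt.mp hj)]
    by_cases hi : i < M.length
    · rw [List.getD_eq_getElem M d hi]
      exact hd _ (List.getElem_mem hi)
    · rw [List.getD_eq_default M d (not_lt.mp hi)]
lemma engel_setup (m : ℕ) (x : ℝ) (hm : 2 ≤ m) (hx0 : 0 < x) (hxlt : x < 1/((m:ℝ)-1))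
    (hj : ¬ ∃ j : ℕ, (j:ℝ) * x = 1) :
    ∃ m' t0 : ℕ, 2 ≤ m' ∧ m ≤ m' ∧ 2 ≤ t0 ∧ x < 1/((m':ℝ)-1) ∧
      x ≤ esum (List.replicate t0 m') ∧ esum (List.replicate (t0-1) m') < x := by
  classical
  have hm1R : (1:ℝ) ≤ (m:ℝ) - 1 := by
    have : (2:ℝ) ≤ m := by exact_mod_cast hm
    linarith
  set m' : ℕ := ⌊1/x⌋₊ + 1 with hm'def
  have hinv0 : 0 ≤ 1/x := by positivity
  have hfl : (⌊1/x⌋₊:ℝ) ≤ 1/x := Nat.floor_le hinv0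
  have hflne : (⌊1/x⌋₊:ℝ) ≠ 1/x := by
    intro h
    exact hj ⟨⌊1/x⌋₊, by rw [h]; field_simp⟩
  have hfl_lt : (⌊1/x⌋₊:ℝ) < 1/x := lt_of_le_of_ne hfl hflne
  have hup : 1/x < (m':ℝ) := by
    rw [hm'def]
    push_cast
    exact Nat.lt_floor_add_one (1/x)
  have hmm' : m ≤ m' := by
    have h1 : (m:ℝ) - 1 < 1/x := by
      rw [lt_div_iff₀ hx0]
      rw [lt_div_iff₀ (by linarith : (0:ℝ) < (m:ℝ)-1)] at hxlt
      linarith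
    have h2 : ((m - 1 : ℕ):ℝ) ≤ 1/x := by
      rw [Nat.cast_sub (by omega)]
      push_cast
      linarith
    have h3 : m - 1 ≤ ⌊1/x⌋₊ := Nat.le_floor h2
    omega
  have hm'2 : 2 ≤ m' := le_trans hm hmm'
  have hm'1R : (1:ℝ) < m' := by
    have : (2:ℝ) ≤ m' := by exact_mod_cast hm'2
    linarith
  have hm'0 : (0:ℝ) < m' := by linarith
  have hm'm1 : (0:ℝ) < (m':ℝ) - 1 := by linarith
  have hxm'2 : x < 1/((m':ℝ)-1) := by
    rw [lt_div_iff₀ hm'm1]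
    have : ((m':ℝ) - 1) = (⌊1/x⌋₊:ℝ) := by rw [hm'def]; push_cast; ring
    rw [this]
    calc (x * (⌊1/x⌋₊:ℝ)) < x * (1/x) := by
          exact mul_lt_mul_of_pos_left hfl_lt hx0
      _ = 1 := by field_simp
  have hxm'1 : 1/(m':ℝ) < x := by
    rw [div_lt_iff₀ hm'0]
    rw [div_lt_iff₀ hx0] at hup
    linarith
  -- existence of t with x ≤ esum (replicate t m')
  have hinvm' : ((m':ℝ))⁻¹ < 1 := by
    rw [inv_lt_one_iff₀]
    right; exact hm'1R
  have hex : ∃ t, x ≤ esum (List.replicate t m') := by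
    have h0 : 0 < 1 - ((m':ℝ)-1)*x := by
      rw [lt_div_iff₀ hm'm1] at hxm'2
      linarith [hxm'2]
    obtain ⟨t, ht⟩ := exists_pow_lt_of_lt_one h0 hinvm'
    refine ⟨t, ?_⟩
    rw [esum_replicate hm'2 t, le_div_iff₀ hm'm1]
    nlinarith [ht]
  set t0 := Nat.find hex with ht0def
  have ht0 : x ≤ esum (List.replicate t0 m') := Nat.find_spec hex
  have hlt : ∀ s < t0, esum (List.replicate s m') < x :=
    fun s hs => not_le.mp (Nat.find_min hex hs)
  have ht02 : 2 ≤ t0 := by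
    have e0 : esum (List.replicate 0 m') < x := by simpa using hx0
    have e1 : esum (List.replicate 1 m') < x := by
      have : esum (List.replicate 1 m') = 1/(m':ℝ) := by
        simp [esum_cons]
      rw [this]; exact hxm'1
    by_contra hcon
    push_neg at hcon
    interval_cases t0
    · linarith
    · linarith
  exact ⟨m', t0, hm'2, hmm', ht02, hxm'2, ht0, hlt _ (by omega)⟩
lemma engel (N : ℕ) : ∀ (m : ℕ) (x : ℝ), 2 ≤ m → 0 < x → x < 1/((m:ℝ)-1) →
    ∃ L : List ℕ, L ≠ [] ∧ List.Pairwise (· ≤ ·) L ∧ (∀ y ∈ L, m ≤ y) ∧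
      x ≤ esum L ∧ esum L < x + (1/((m:ℝ)-1)) * (1/2)^N := by
  induction N with
  | zero =>
    intro m x hm hx0 hxlt
    have hm1R : (1:ℝ) ≤ (m:ℝ) - 1 := by
      have : (2:ℝ) ≤ m := by exact_mod_cast hm
      linarith
    by_cases hj : ∃ j : ℕ, (j:ℝ) * x = 1
    · obtain ⟨j, hjx⟩ := hj
      have hj0 : (j:ℝ) ≠ 0 := by intro h; rw [h] at hjx; simp at hjx
      have hjpos : 0 < (j:ℝ) := by positivity
      have hxj : x = 1/(j:ℝ) := by field_simp; linarith [hjx]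
      have hmj : m ≤ j := by
        have h1 : (m:ℝ) - 1 < j := by
          rw [hxj] at hxlt
          rw [div_lt_div_iff₀ hjpos (by linarith)] at hxlt
          linarith
        have h2 : (m:ℝ) < (j:ℝ) + 1 := by linarith
        have h3 : m < j + 1 := by exact_mod_cast h2
        omega
      refine ⟨[j], by simp, List.pairwise_singleton (· ≤ ·) j, ?_, ?_, ?_⟩
      · intro y hy; simp at hy; omega
      · rw [esum_cons]; simp [hxj]
      · rw [esum_cons]
        simp only [esum_nil, add_zero, pow_zero, mul_one]
        have hpos : (0:ℝ) < 1/((m:ℝ)-1) := by positivity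
        have : (1:ℝ)/(j:ℝ) = x := hxj.symm
        rw [this]
        linarith
    · obtain ⟨m', t0, hm'2, hmm', ht02, hxm'2, ht0, hlt1⟩ :=
        engel_setup m x hm hx0 hxlt hj
      have hm'm1 : (0:ℝ) < (m':ℝ) - 1 := by
        have : (2:ℝ) ≤ m' := by exact_mod_cast hm'2
        linarith
      refine ⟨List.replicate t0 m', ?_, ?_, ?_, ht0, ?_⟩
      · have : (List.replicate t0 m').length = t0 := List.length_replicate
        intro h; rw [h] at this; simp at this; omega
      · exact List.pairwise_replicate.mpr (Or.inr le_rfl)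
      · intro y hy; rw [List.eq_of_mem_replicate hy]; exact hmm'
      · rw [esum_replicate hm'2 t0]
        have hi : (0:ℝ) < ((m':ℝ)⁻¹)^t0 := by positivity
        have h1 : (1 - ((m':ℝ)⁻¹)^t0) / ((m':ℝ)-1) < 1/((m':ℝ)-1) := by
          rw [div_lt_div_iff₀ hm'm1 hm'm1]
          nlinarith
        have h2 : 1/((m':ℝ)-1) ≤ 1/((m:ℝ)-1) := by
          apply one_div_le_one_div_of_le (by linarith)
          have : (m:ℝ) ≤ m' := by exact_mod_cast hmm'
          linarith
        simp only [pow_zero, mul_one]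
        linarith
  | succ N ih =>
    intro m x hm hx0 hxlt
    have hm1R : (1:ℝ) ≤ (m:ℝ) - 1 := by
      have : (2:ℝ) ≤ m := by exact_mod_cast hm
      linarith
    by_cases hj : ∃ j : ℕ, (j:ℝ) * x = 1
    · obtain ⟨j, hjx⟩ := hj
      have hj0 : (j:ℝ) ≠ 0 := by intro h; rw [h] at hjx; simp at hjx
      have hjpos : 0 < (j:ℝ) := by positivity
      have hxj : x = 1/(j:ℝ) := by field_simp; linarith [hjx]
      have hmj : m ≤ j := by
        have h1 : (m:ℝ) - 1 < j := by
          rw [hxj] at hxlt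
          rw [div_lt_div_iff₀ hjpos (by linarith)] at hxlt
          linarith
        have h2 : (m:ℝ) < (j:ℝ) + 1 := by linarith
        have h3 : m < j + 1 := by exact_mod_cast h2
        omega
      refine ⟨[j], by simp, List.pairwise_singleton (· ≤ ·) j, ?_, ?_, ?_⟩
      · intro y hy; simp at hy; omega
      · rw [esum_cons]; simp [hxj]
      · rw [esum_cons]
        simp only [esum_nil, add_zero]
        have hpos : (0:ℝ) < (1/((m:ℝ)-1)) * (1/2)^(N+1) := by positivity
        have : (1:ℝ)/(j:ℝ) = x := hxj.symm
        rw [this]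
        linarith
    · obtain ⟨m', t0, hm'2, hmm', ht02, hxm'2, ht0, hlt1⟩ :=
        engel_setup m x hm hx0 hxlt hj
      have hm'0 : (0:ℝ) < m' := by
        have : (2:ℝ) ≤ m' := by exact_mod_cast hm'2
        linarith
      have hm'm1 : (0:ℝ) < (m':ℝ) - 1 := by
        have : (2:ℝ) ≤ m' := by exact_mod_cast hm'2
        linarith
      set t1 := t0 - 1 with ht1def
      have ht11 : 1 ≤ t1 := by omega
      set g := esum (List.replicate t1 m') with hgdef
      have hg : g < x := hlt1
      set y := x - g with hydef
      have hy0 : 0 < y := by rw [hydef]; linarith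
      set i : ℝ := ((m':ℝ))⁻¹ with hidef
      have hi0 : 0 < i := by rw [hidef]; positivity
      have hi12 : i ≤ 1/2 := by
        rw [hidef]
        rw [inv_le_comm₀ hm'0 (by norm_num)]
        have : (2:ℝ) ≤ m' := by exact_mod_cast hm'2
        linarith
      have hpow : i^t1 * (m':ℝ)^t1 = 1 := by
        rw [hidef, ← mul_pow, inv_mul_cancel₀ (ne_of_gt hm'0), one_pow]
      have hit1pos : (0:ℝ) < i^t1 := by positivity
      set x' := y * (m':ℝ)^t1 with hx'def
      have hx'0 : 0 < x' := by rw [hx'def]; positivity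
      have hgf : g = (1 - i^t1)/((m':ℝ)-1) := by
        rw [hgdef, esum_replicate hm'2 t1, hidef]
      have hsum : (1 - i^t1)/((m':ℝ)-1) + i^t1/((m':ℝ)-1) = 1/((m':ℝ)-1) := by
        rw [← add_div, sub_add_cancel]
      have hylt : y < i^t1/((m':ℝ)-1) := by
        rw [hydef, hgf]
        linarith [hxm'2, hsum]
      have hx'lt : x' < 1/((m':ℝ)-1) := by
        rw [hx'def]
        calc y * (m':ℝ)^t1 < (i^t1/((m':ℝ)-1)) * (m':ℝ)^t1 :=
              mul_lt_mul_of_pos_right hylt (by positivity)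
          _ = 1/((m':ℝ)-1) := by
              rw [div_mul_eq_mul_div, hpow]
      obtain ⟨L', hne', hsort', hmem', hlow', hup'⟩ := ih m' x' hm'2 hx'0 hx'lt
      have hx'i : x' * i^t1 = y := by
        rw [hx'def, mul_assoc, mul_comm ((m':ℝ)^t1), hpow, mul_one]
      have hesum : esum (List.replicate t1 m' ++ L') = g + esum L' * i^t1 := by
        rw [esum_replicate_append (by omega) t1 L', hgdef, hidef]
      refine ⟨List.replicate t1 m' ++ L', ?_, ?_, ?_, ?_, ?_⟩
      · intro h
        rw [List.append_eq_nil_iff] at h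
        exact hne' h.2
      · rw [List.pairwise_append]
        refine ⟨List.pairwise_replicate.mpr (Or.inr le_rfl), hsort', ?_⟩
        intro a ha b hb
        rw [List.eq_of_mem_replicate ha]
        exact hmem' b hb
      · intro b hb
        rcases List.mem_append.mp hb with h | h
        · rw [List.eq_of_mem_replicate h]; exact hmm'
        · exact le_trans hmm' (hmem' b h)
      · rw [hesum]
        have : x' * i^t1 ≤ esum L' * i^t1 :=
          mul_le_mul_of_nonneg_right hlow' (le_of_lt hit1pos)
        rw [hx'i] at this
        rw [hydef] at this
        linarith
      · rw [hesum]
        have h1 : esum L' * i^t1 < (x' + (1/((m':ℝ)-1)) * (1/2)^N) * i^t1 :=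
          mul_lt_mul_of_pos_right hup' hit1pos
        have h2 : (x' + (1/((m':ℝ)-1)) * (1/2)^N) * i^t1
            = y + (1/((m':ℝ)-1)) * (1/2)^N * i^t1 := by
          rw [add_mul, hx'i]
        have h3 : (1/((m':ℝ)-1)) * (1/2)^N * i^t1 ≤ (1/((m:ℝ)-1)) * (1/2)^N * (1/2) := by
          have ha : 1/((m':ℝ)-1) ≤ 1/((m:ℝ)-1) := by
            apply one_div_le_one_div_of_le (by linarith)
            have : (m:ℝ) ≤ m' := by exact_mod_cast hmm'
            linarith
          have hb : i^t1 ≤ 1/2 := by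
            calc i^t1 ≤ i^1 := pow_le_pow_of_le_one (le_of_lt hi0) (by linarith) ht11
              _ = i := pow_one i
              _ ≤ 1/2 := hi12
          have hc : (0:ℝ) ≤ (1/((m':ℝ)-1)) * (1/2)^N := by positivity
          calc (1/((m':ℝ)-1)) * (1/2)^N * i^t1 ≤ (1/((m':ℝ)-1)) * (1/2)^N * (1/2) :=
                mul_le_mul_of_nonneg_left hb hc
            _ ≤ (1/((m:ℝ)-1)) * (1/2)^N * (1/2) := by
                apply mul_le_mul_of_nonneg_right _ (by norm_num)
                apply mul_le_mul_of_nonneg_right ha (by positivity)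
        have h4 : (1/((m:ℝ)-1)) * (1/2)^N * (1/2) = (1/((m:ℝ)-1)) * (1/2)^(N+1) := by
          rw [pow_succ]; ring
        rw [hydef] at h2
        linarith
set_option maxHeartbeats 1000000 in
theorem stmt11 (α η : ℝ) (k : ℕ) (hα₁ : 1 / 2 < α) (hα₂ : α < 1) (hη : 0 < η)
    (hk : 0 < k) (hk2 : 1 / (2 * α - 1) ≤ (k : ℝ) + 1) :
    ∃ (l : ℕ) (a : ℕ → ℕ), 0 < l ∧ (∀ i, 0 < a i) ∧ Monotone a ∧
      2 * α - 1 <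
        (∑ j ∈ Finset.range (l + 1), 1 / ∏ i ∈ Finset.range j, (a i : ℝ)) /
          ((k : ℝ) + ∑ j ∈ Finset.range l, 1 / ∏ i ∈ Finset.range j, (a i : ℝ)) ∧
      (∑ j ∈ Finset.range (l + 1), 1 / ∏ i ∈ Finset.range j, (a i : ℝ)) /
          ((k : ℝ) + ∑ j ∈ Finset.range l, 1 / ∏ i ∈ Finset.range j, (a i : ℝ)) <
        2 * (α + η) - 1 := by
  classical
  obtain ⟨c, hcdef⟩ : ∃ c : ℝ, c = 2*α - 1 := ⟨_, rfl⟩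
  have hgoalc : 2*α - 1 = c := hcdef.symm
  have hc0 : 0 < c := by rw [hcdef]; linarith
  have hc1 : c < 1 := by rw [hcdef]; linarith
  have h1c : 0 < 1 - c := by linarith
  have hkR : (1:ℝ) ≤ k := by exact_mod_cast hk
  have hck : 1 - c ≤ c * k := by
    rw [hgoalc] at hk2
    rw [div_le_iff₀ hc0] at hk2
    have hexp : ((k:ℝ)+1)*c = c*(k:ℝ) + c := by ring
    linarith only [hk2, hexp]
  obtain ⟨A, hAdef⟩ : ∃ A : ℝ, A = c*k/(1-c) := ⟨_, rfl⟩
  have hA1 : 1 ≤ A := by rw [hAdef, le_div_iff₀ h1c]; linarith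
  obtain ⟨q, hqdef⟩ : ∃ q : ℕ, q = ⌊A⌋₊ := ⟨_, rfl⟩
  have hq1 : 1 ≤ q := by rw [hqdef]; exact Nat.le_floor (by exact_mod_cast hA1)
  have hqR : (1:ℝ) ≤ q := by exact_mod_cast hq1
  have hqA : (q:ℝ) ≤ A := by rw [hqdef]; exact Nat.floor_le (by linarith)
  have hAq1 : A < (q:ℝ) + 1 := by rw [hqdef]; exact Nat.lt_floor_add_one A
  obtain ⟨x, hxdef⟩ : ∃ x : ℝ, x = A - q := ⟨_, rfl⟩
  have hx0 : 0 ≤ x := by rw [hxdef]; linarith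
  have hx1 : x < 1 := by rw [hxdef]; linarith
  obtain ⟨ε, hedef⟩ : ∃ e : ℝ, e = 2*η*((k:ℝ)+1)/(1-c) := ⟨_, rfl⟩
  have hε0 : 0 < ε := by rw [hedef]; positivity
  obtain ⟨μ, hμdef⟩ : ∃ m : ℝ, m = min (ε/2) (1/2) := ⟨_, rfl⟩
  have hμ0 : 0 < μ := by rw [hμdef]; exact lt_min (by positivity) (by norm_num)
  have hμhalf : μ ≤ 1/2 := by rw [hμdef]; exact min_le_right _ _
  have hμε : μ ≤ ε/2 := by rw [hμdef]; exact min_le_left _ _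
  obtain ⟨x'', hx''def⟩ : ∃ y : ℝ, y = max x μ := ⟨_, rfl⟩
  have hx''0 : 0 < x'' := by
    rw [hx''def]; exact lt_of_lt_of_le hμ0 (le_max_right _ _)
  have hx''1 : x'' < 1 := by rw [hx''def]; exact max_lt hx1 (by linarith)
  obtain ⟨N, hN⟩ := exists_pow_lt_of_lt_one hμ0 (show (1:ℝ)/2 < 1 by norm_num)
  obtain ⟨L, hLne, hLsort, hLmem, hLlow, hLup⟩ :=
    engel N 2 x'' (le_refl 2) hx''0 (by norm_num; exact hx''1)
  have hLup' : esum L < x'' + μ := by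
    have h1 : (1:ℝ)/(((2:ℕ):ℝ)-1) = 1 := by norm_num
    rw [h1, one_mul] at hLup
    linarith
  have hL1 : ∀ y ∈ L, 1 ≤ y := fun y hy => le_trans (by norm_num) (hLmem y hy)
  have hLpos : 0 < esum L := esum_pos hL1 hLne
  have hlow2 : x ≤ esum L := le_trans (by rw [hx''def] at hLlow ⊢; exact le_max_left _ _) hLlow
  have hup2 : esum L < x + ε := by
    have hx''le : x'' ≤ x + μ := by
      rw [hx''def]; exact max_le (by linarith) (by linarith)
    linarith
  obtain ⟨S, hSdef⟩ : ∃ S : ℝ, S = q + esum L := ⟨_, rfl⟩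
  have hSA : A ≤ S := by rw [hSdef]; rw [hxdef] at hlow2; linarith
  have hSup : S < A + ε := by rw [hSdef]; rw [hxdef] at hup2; linarith
  have hS1 : 1 < S := by rw [hSdef]; linarith
  have h6 : (1-c)*A = c*(k:ℝ) := by rw [hAdef]; field_simp
  have h7 : (1-c)*ε = 2*η*((k:ℝ)+1) := by rw [hedef]; field_simp
  have hF1 : c * ((k:ℝ) + S) ≤ S := by
    have h9 : (1-c)*A ≤ (1-c)*S := mul_le_mul_of_nonneg_left hSA (le_of_lt h1c)
    have hexp1 : (1-c)*A = A - c*A := by ring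
    have hexp2 : (1-c)*S = S - c*S := by ring
    have hexp3 : c * ((k:ℝ) + S) = c*(k:ℝ) + c*S := by ring
    linarith only [h9, h6, hexp1, hexp2, hexp3]
  have hR0 : 0 < (2*(α+η)-1) * ((k:ℝ) + S) - S := by
    have h10 : (1-c)*S < (1-c)*(A+ε) := mul_lt_mul_of_pos_left hSup h1c
    have h11 : (1-c)*(A+ε) = c*(k:ℝ) + 2*η*((k:ℝ)+1) := by rw [mul_add, h6, h7]
    have h12 : 2*η*1 < 2*η*S := by
      have := mul_lt_mul_of_pos_left hS1 (show (0:ℝ) < 2*η by linarith)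
      linarith
    have h8 : (2*(α+η)-1) * ((k:ℝ) + S) - S = (c + 2*η) * ((k:ℝ) + S) - S := by
      rw [hcdef]; ring
    rw [h8]
    have hexp1 : (1-c)*S = S - c*S := by ring
    have hexp2 : (1-c)*(A+ε) = A + ε - c*A - c*ε := by ring
    have hexp3 : (c + 2*η) * ((k:ℝ) + S) - S = c*(k:ℝ) + c*S + 2*η*(k:ℝ) + 2*η*S - S := by ring
    have hexp4 : c*(k:ℝ) + 2*η*((k:ℝ)+1) = c*(k:ℝ) + 2*η*(k:ℝ) + 2*η := by ring
    linarith only [h10, h11, h12, hexp1, hexp2, hexp3, hexp4]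
  obtain ⟨R, hRdef⟩ : ∃ R : ℝ, R = (2*(α+η)-1) * ((k:ℝ) + S) - S := ⟨_, rfl⟩
  have hR : 0 < R := by rw [hRdef]; exact hR0
  obtain ⟨P, hPdef⟩ : ∃ P : ℕ, P = L.prod := ⟨_, rfl⟩
  have hPpos : 0 < P := by rw [hPdef]; exact List.prod_pos (fun y hy => hL1 y hy)
  have hPR : (1:ℝ) ≤ P := by exact_mod_cast hPpos
  obtain ⟨n, hndef⟩ : ∃ n : ℕ, n = max P (⌈1/R⌉₊ + 1) := ⟨_, rfl⟩
  have hnP : P ≤ n := by rw [hndef]; exact le_max_left _ _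
  have hn1 : 1 ≤ n := le_trans hPpos hnP
  have hnR : (1:ℝ) ≤ n := by exact_mod_cast hn1
  have hn0 : (0:ℝ) < n := by linarith
  have hnRR : 1/R < (n:ℝ) := by
    have h1 : (1:ℝ)/R ≤ (⌈1/R⌉₊:ℝ) := Nat.le_ceil _
    have h2 : ((⌈1/R⌉₊ + 1 : ℕ):ℝ) ≤ n := by
      have : ⌈1/R⌉₊ + 1 ≤ n := by rw [hndef]; exact le_max_right _ _
      exact_mod_cast this
    push_cast at h2
    linarith
  have hu : (1:ℝ)/((n:ℝ)*(P:ℝ)) < R := by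
    have hP0 : (0:ℝ) < P := by linarith
    have h1 : (1:ℝ)/((n:ℝ)*(P:ℝ)) ≤ 1/(n:ℝ) := by
      apply one_div_le_one_div_of_le hn0
      exact le_mul_of_one_le_right (by linarith only [hn0]) hPR
    have h2 : (1:ℝ)/(n:ℝ) < R := by
      rw [div_lt_iff₀ hn0]
      rw [div_lt_iff₀ hR] at hnRR
      have hexp : (n:ℝ) * R = R * (n:ℝ) := by ring
      linarith only [hnRR, hexp]
    linarith
  obtain ⟨X, hXdef⟩ : ∃ X : List ℕ, X = List.replicate (q-1) 1 ++ L := ⟨_, rfl⟩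
  have hX1 : ∀ y ∈ X, 1 ≤ y := by
    intro y hy
    rw [hXdef] at hy
    rcases List.mem_append.mp hy with h | h
    · rw [List.eq_of_mem_replicate h]
    · exact hL1 y h
  obtain ⟨M, hMdef⟩ : ∃ M : List ℕ, M = X ++ [n] := ⟨_, rfl⟩
  have hM1 : ∀ y ∈ M, 1 ≤ y := by
    intro y hy
    rw [hMdef] at hy
    rcases List.mem_append.mp hy with h | h
    · exact hX1 y h
    · simp at h; omega
  have hMbound : ∀ y ∈ M, y ≤ n := by
    intro y hy
    rw [hMdef] at hy
    rcases List.mem_append.mp hy with h | h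
    · rw [hXdef] at h
      rcases List.mem_append.mp h with h2 | h2
      · rw [List.eq_of_mem_replicate h2]; exact hn1
      · refine le_trans (le_trans (Nat.le_of_dvd ?_ (List.dvd_prod h2)) ?_) hnP
        · rw [hPdef] at hPpos; exact hPpos
        · rw [hPdef]
    · simp at h; omega
  have hMsort : List.Pairwise (· ≤ ·) M := by
    rw [hMdef, List.pairwise_append]
    refine ⟨?_, by simp, ?_⟩
    · rw [hXdef, List.pairwise_append]
      refine ⟨List.pairwise_replicate.mpr (Or.inr le_rfl), hLsort, ?_⟩
      intro a2 ha b hb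
      rw [List.eq_of_mem_replicate ha]
      exact le_trans (by norm_num) (hLmem b hb)
    · intro a2 ha b hb
      simp at hb
      rw [hb]
      exact hMbound a2 (by rw [hMdef]; exact List.mem_append.mpr (Or.inl ha))
  have hMlen : M.length = X.length + 1 := by
    rw [hMdef, List.length_append, List.length_singleton]
  have hesumX : esum X = ((q:ℝ) - 1) + esum L := by
    rw [hXdef, esum_replicate_append le_rfl, esum_replicate_one]
    have : ((q - 1 : ℕ):ℝ) = (q:ℝ) - 1 := by
      rw [Nat.cast_sub hq1]; norm_num
    rw [this]
    norm_num
  have hXprod : ((X.prod : ℕ) : ℝ) = (P:ℝ) := by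
    rw [hXdef, List.prod_append, List.prod_replicate, one_pow, one_mul, hPdef]
  have hesumM : esum M = ((q:ℝ) - 1) + esum L + 1/((n:ℝ)*(P:ℝ)) := by
    rw [hMdef, esum_append_singleton hX1 hn1, hesumX, hXprod]
  have hnum : (∑ j ∈ Finset.range (M.length + 1),
      (1:ℝ) / ∏ i ∈ Finset.range j, ((M.getD i n : ℕ) : ℝ)) = 1 + esum M := by
    have := sum_inv_prod_range M n M.length le_rfl
    rwa [List.take_length] at this
  have hden : (∑ j ∈ Finset.range M.length,
      (1:ℝ) / ∏ i ∈ Finset.range j, ((M.getD i n : ℕ) : ℝ)) = 1 + esum X := by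
    have h2 := sum_inv_prod_range M n X.length (by rw [hMlen]; omega)
    have h3 : M.take X.length = X := by rw [hMdef]; exact List.take_left
    rw [h3] at h2
    rw [hMlen]
    exact h2
  have hnum2 : (1:ℝ) + esum M = S + 1/((n:ℝ)*(P:ℝ)) := by
    rw [hesumM, hSdef]; ring
  have hden2 : (1:ℝ) + esum X = S := by rw [hesumX, hSdef]; ring
  have hD : (0:ℝ) < (k:ℝ) + S := by linarith
  have hupos : (0:ℝ) < 1/((n:ℝ)*(P:ℝ)) := by positivity
  refine ⟨M.length, fun i2 => M.getD i2 n, ?_, ?_, ?_, ?_, ?_⟩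
  · rw [hMlen]; omega
  · intro i2
    show 0 < M.getD i2 n
    by_cases hi : i2 < M.length
    · rw [List.getD_eq_getElem M n hi]
      exact hM1 _ (List.getElem_mem hi)
    · rw [List.getD_eq_default M n (not_lt.mp hi)]
      omega
  · exact monotone_getD hMsort hMbound
  · beta_reduce
    rw [hgoalc, hnum, hden, hnum2, hden2, lt_div_iff₀ hD]
    linarith only [hF1, hupos]
  · beta_reduce
    rw [hnum, hden, hnum2, hden2, div_lt_iff₀ hD]
    have hu' : 1/((n:ℝ)*(P:ℝ)) < (2*(α+η)-1) * ((k:ℝ) + S) - S := by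
      rw [← hRdef]; exact hu
    linarith only [hu']
end

section
/- Let k ≥ 1 and n_1 ≤ n_2 ≤ … ≤ n_l be positive integers, let 𝐓 = 𝐓(n_1,…,n_l;k) be the branching tree defined in the context, let 𝐐 be its set of non-leaf vertices, χ = |𝐐|, and ζ = |E(𝐓)|, and assume χ/ζ < 1/k. Then for every subtree T₀ of 𝐓 with at least one edge and T₀ ≠ 𝐓, one has |V(T₀)∩𝐐| / |E(T₀)| > χ/ζ. -/
/-- Vertices of the branching tree with child-count function `c` and `l+2` generations:
a vertex in generation `j` (`0 ≤ j ≤ l+1`) is a list recording, for each ancestor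
generation `i`, which of the `c i` children was taken. The root is the empty list. -/
def BTVert (c : ℕ → ℕ) (l : ℕ) : Type :=
  {s : List ℕ // s.length ≤ l + 1 ∧ ∀ i, i < s.length → s.getD i 0 < c i}

/-- The branching tree 𝐓(c; l): every vertex in generation `i ≤ l` has exactly `c i`
children, and vertices in generation `l+1` are leaves.  Two vertices are adjacent iff
one is obtained from the other by appending one further choice of child. -/
def btGraph (c : ℕ → ℕ) (l : ℕ) : SimpleGraph (BTVert c l) where
  Adj u v := (∃ x, v.1 = u.1 ++ [x]) ∨ (∃ x, u.1 = v.1 ++ [x])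
  symm := ⟨fun u v h => h.symm⟩
  loopless := ⟨fun u h => by
    rcases h with ⟨x, hx⟩ | ⟨x, hx⟩ <;> simpa using congrArg List.length hx⟩


attribute [local instance] Classical.propDecidable

namespace BT

variable {c : ℕ → ℕ} {l : ℕ}

lemma vert_ext {u v : BTVert c l} (h : u.1 = v.1) : u = v := Subtype.ext h

/-- parent: drop the last entry -/
def pa (v : BTVert c l) : BTVert c l :=
  ⟨v.1.dropLast, by
    constructor
    · exact le_trans (by simpa using List.length_dropLast v.1 ▸ Nat.sub_le _ _) v.2.1
    · intro i hi
      have hlt : i < v.1.length := lt_of_lt_of_le hi (by simp [List.length_dropLast])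
      have h1 : v.1.dropLast.getD i 0 = v.1.dropLast[i]'hi := List.getD_eq_getElem _ _ hi
      have h2 : v.1.getD i 0 = v.1[i]'hlt := List.getD_eq_getElem _ _ hlt
      rw [h1, List.getElem_dropLast, ← h2]
      exact v.2.2 i hlt⟩

lemma pa_spec {v : BTVert c l} (h : v.1 ≠ []) : v.1 = (pa v).1 ++ [v.1.getLast h] :=
  (List.dropLast_append_getLast h).symm

lemma pa_len (v : BTVert c l) : (pa v).1.length = v.1.length - 1 := by
  simp [pa]

instance : Finite (BTVert c l) := by
  classical
  set M := (Finset.range (l + 2)).sup c + 1 with hM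
  have hMpos : 0 < M := Nat.succ_pos _
  have hbound : ∀ (v : BTVert c l) (i : ℕ), v.1.getD i 0 < M := by
    intro v i
    by_cases hi : i < v.1.length
    · have hv1 := v.2.1
      have : c i ≤ (Finset.range (l + 2)).sup c :=
        Finset.le_sup (Finset.mem_range.2 (lt_of_lt_of_le hi (by omega)))
      exact lt_of_lt_of_le (v.2.2 i hi) (by omega)
    · rw [List.getD_eq_default _ _ (le_of_not_gt hi)]; exact hMpos
  apply Finite.of_injective (fun v : BTVert c l =>
    ((fun i : Fin (l + 2) => (⟨v.1.getD i 0, hbound v i⟩ : Fin M)),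
      (⟨v.1.length, by have := v.2.1; omega⟩ : Fin (l + 2))))
  intro u v huv
  obtain ⟨h1, h2⟩ := Prod.mk.injEq .. ▸ huv
  have h2' : u.1.length = v.1.length := by
    have := congrArg Fin.val h2; simpa using this
  apply vert_ext
  apply List.ext_getElem h2'
  intro n hn1 hn2
  have hn : n < l + 2 := lt_of_lt_of_le hn1 (by have := u.2.1; omega)
  have := congrFun h1 ⟨n, hn⟩
  simp only [Fin.mk.injEq] at this
  rwa [List.getD_eq_getElem _ _ hn1, List.getD_eq_getElem _ _ hn2] at this

/-- generation j -/
def gen (c : ℕ → ℕ) (l j : ℕ) : Set (BTVert c l) := {v | v.1.length = j}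

lemma valid_append {s : List ℕ} {x : ℕ}
    (h1 : s.length ≤ l) (h2 : ∀ i, i < s.length → s.getD i 0 < c i)
    (hx : x < c s.length) :
    (s ++ [x]).length ≤ l + 1 ∧ ∀ i, i < (s ++ [x]).length → (s ++ [x]).getD i 0 < c i := by
  constructor
  · simp; omega
  · intro i hi
    simp only [List.length_append, List.length_cons, List.length_nil] at hi
    rcases lt_or_eq_of_le (Nat.lt_succ_iff.mp hi) with hlt | heq
    · rw [List.getD_append _ _ _ _ hlt]; exact h2 i hlt
    · subst heq
      have : (s ++ [x]).getD s.length 0 = x := by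
        rw [List.getD_eq_getElem _ _ (by simp)]
        simp
      rw [this]; exact hx


/-- total append function (junk value if invalid) -/
noncomputable def app (p : BTVert c l × ℕ) : BTVert c l :=
  if h : (p.1.1 ++ [p.2]).length ≤ l + 1 ∧
      ∀ i, i < (p.1.1 ++ [p.2]).length → (p.1.1 ++ [p.2]).getD i 0 < c i then
    ⟨p.1.1 ++ [p.2], h⟩ else p.1

lemma app_eq {p : BTVert c l × ℕ} (h1 : p.1.1.length ≤ l) (hx : p.2 < c p.1.1.length) :
    (app p).1 = p.1.1 ++ [p.2] := by
  have e : app p = ⟨p.1.1 ++ [p.2], valid_append h1 p.1.2.2 hx⟩ :=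
    dif_pos (valid_append h1 p.1.2.2 hx)
  rw [e]

lemma getLast_lt {v : BTVert c l} (h : v.1 ≠ []) : v.1.getLast h < c (v.1.length - 1) := by
  have hlen : 0 < v.1.length := List.length_pos_iff.2 h
  have h3 := v.2.2 (v.1.length - 1) (by omega)
  rw [List.getD_eq_getElem _ _ (by omega)] at h3
  rw [List.getLast_eq_getElem]
  exact h3

lemma gen_bij {j : ℕ} (hj : j ≤ l) :
    Set.BijOn (app (c := c) (l := l)) (gen c l j ×ˢ Set.Iio (c j)) (gen c l (j + 1)) := by
  refine ⟨?_, ?_, ?_⟩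
  · rintro ⟨v, x⟩ ⟨hv, hx⟩
    have hvl : v.1.length = j := hv
    have hxl : x < c j := hx
    have he := app_eq (c := c) (l := l) (p := (v, x)) (hvl ▸ hj) (by rw [hvl]; exact hxl)
    simp only [gen, Set.mem_setOf_eq, he, List.length_append, List.length_cons, List.length_nil]
    omega
  · rintro ⟨v, x⟩ ⟨hv, hx⟩ ⟨w, y⟩ ⟨hw, hy⟩ heq
    have hvl : v.1.length = j := hv
    have hwl : w.1.length = j := hw
    have he1 := app_eq (c := c) (l := l) (p := (v, x)) (hvl ▸ hj) (by rw [hvl]; exact hx)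
    have he2 := app_eq (c := c) (l := l) (p := (w, y)) (hwl ▸ hj) (by rw [hwl]; exact hy)
    have : v.1 ++ [x] = w.1 ++ [y] := by rw [← he1, ← he2, heq]
    have hlen : v.1.length = w.1.length := by
      simp only [gen, Set.mem_setOf_eq] at hv hw; rw [hv, hw]
    obtain ⟨h1, h2⟩ := List.append_inj this hlen
    simp only [List.cons.injEq] at h2
    exact Prod.ext (vert_ext h1) h2.1
  · rintro w hw
    simp only [gen, Set.mem_setOf_eq] at hw
    have hne : w.1 ≠ [] := by intro h; rw [h] at hw; simp at hw
    have hpl : (pa w).1.length = j := by rw [pa_len, hw]; omega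
    have hlast : w.1.getLast hne < c j := by
      have := getLast_lt hne; rwa [hw] at this; 
    refine ⟨(pa w, w.1.getLast hne), ⟨hpl, hlast⟩, ?_⟩
    apply vert_ext
    rw [app_eq (by show (pa w).1.length ≤ l; omega)
      (by show w.1.getLast hne < c (pa w).1.length; rw [hpl]; exact hlast)]
    exact List.dropLast_append_getLast hne

lemma ncard_prod_aux (s : Set (BTVert c l)) (n : ℕ) :
    (s ×ˢ Set.Iio n).ncard = s.ncard * n := by
  have hs : s.Finite := Set.toFinite _
  have ht : (Set.Iio n).Finite := Set.finite_Iio n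
  rw [Set.ncard_eq_toFinset_card _ (hs.prod ht), ← Set.Finite.toFinset_prod hs ht,
    Finset.card_product, Set.ncard_eq_toFinset_card _ hs]
  congr 1
  have h2 : ht.toFinset = Finset.Iio n := by ext x; simp
  rw [h2, Nat.card_Iio]

lemma ncard_gen_succ {j : ℕ} (hj : j ≤ l) :
    (gen c l (j + 1)).ncard = (gen c l j).ncard * c j := by
  rw [← (gen_bij hj).image_eq, Set.ncard_image_of_injOn (gen_bij hj).injOn, ncard_prod_aux]

def root : BTVert c l := ⟨[], by simp⟩

lemma ncard_gen_zero : (gen c l 0).ncard = 1 := by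
  have : gen c l 0 = {(root : BTVert c l)} := by
    ext v
    simp only [gen, Set.mem_setOf_eq, Set.mem_singleton_iff, List.length_eq_zero_iff]
    constructor
    · intro h; apply vert_ext; simp [root, h]
    · intro h; rw [h]; rfl
  rw [this, Set.ncard_singleton]

lemma ncard_gen {j : ℕ} (hj : j ≤ l + 1) :
    (gen c l j).ncard = ∏ i ∈ Finset.range j, c i := by
  induction j with
  | zero => simpa using ncard_gen_zero
  | succ n ih =>
    rw [ncard_gen_succ (by omega), ih (by omega), Finset.prod_range_succ]

lemma partition_ncard (A : Set (BTVert c l)) (n : ℕ) :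
    (A ∩ {v | v.1.length ≤ n}).ncard = ∑ j ∈ Finset.range (n + 1), (A ∩ gen c l j).ncard := by
  induction n with
  | zero =>
    have h0 : {v : BTVert c l | v.1.length ≤ 0} = gen c l 0 := by
      ext v; simp [gen]
    rw [h0, Finset.sum_range_one]
  | succ n ih =>
    have hsplit : A ∩ {v | v.1.length ≤ n + 1} =
        (A ∩ {v | v.1.length ≤ n}) ∪ (A ∩ gen c l (n + 1)) := by
      ext v; simp only [Set.mem_inter_iff, Set.mem_union, Set.mem_setOf_eq, gen]
      constructor
      · rintro ⟨ha, hl⟩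
        rcases Nat.lt_or_ge v.1.length (n+1) with h | h
        · exact Or.inl ⟨ha, by omega⟩
        · exact Or.inr ⟨ha, by omega⟩
      · rintro (⟨ha, hl⟩ | ⟨ha, hl⟩) <;> exact ⟨ha, by omega⟩
    have hdisj : Disjoint (A ∩ {v : BTVert c l | v.1.length ≤ n}) (A ∩ gen c l (n + 1)) := by
      rw [Set.disjoint_left]
      rintro v ⟨_, h1⟩ ⟨_, h2⟩
      simp only [Set.mem_setOf_eq] at h1
      simp only [gen, Set.mem_setOf_eq] at h2
      omega
    rw [hsplit, Set.ncard_union_eq hdisj (Set.toFinite _) (Set.toFinite _), ih]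
    exact (Finset.sum_range_succ _ (n + 1)).symm


/-- edge map: vertex to edge joining it with its parent -/
def em (v : BTVert c l) : Sym2 (BTVert c l) := s(pa v, v)

lemma pa_adj {v : BTVert c l} (h : v.1 ≠ []) : (btGraph c l).Adj (pa v) v :=
  Or.inl ⟨v.1.getLast h, pa_spec h⟩

lemma pa_of_concat {u w : BTVert c l} {z : ℕ} (h : u.1 = w.1 ++ [z]) : pa u = w :=
  vert_ext (by rw [pa]; simp [h])

lemma em_injOn {S : Set (BTVert c l)} (hS : ∀ v ∈ S, v.1 ≠ []) : Set.InjOn em S := by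
  intro u hu v hv h
  rcases Sym2.eq_iff.1 h with ⟨h1, h2⟩ | ⟨h1, h2⟩
  · exact h2
  · exfalso
    have l1 := pa_len u
    have l2 := pa_len v
    have n1 : u.1.length ≠ 0 := fun hh => hS u hu (List.length_eq_zero_iff.1 hh)
    have n2 : v.1.length ≠ 0 := fun hh => hS v hv (List.length_eq_zero_iff.1 hh)
    have e1 : (pa u).1.length = v.1.length := congrArg (fun w : BTVert c l => w.1.length) h1
    have e2 : u.1.length = (pa v).1.length := congrArg (fun w : BTVert c l => w.1.length) h2
    omega

lemma edge_bijOn : Set.BijOn em {v : BTVert c l | v.1 ≠ []} (btGraph c l).edgeSet := by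
  refine ⟨?_, em_injOn (fun v hv => hv), ?_⟩
  · intro v hv
    exact (SimpleGraph.mem_edgeSet _).2 (pa_adj hv)
  · intro e he
    induction e using Sym2.ind with
    | _ x y =>
      rcases (SimpleGraph.mem_edgeSet _).1 he with ⟨z, hz⟩ | ⟨z, hz⟩
      · have hy : y.1 ≠ [] := by rw [hz]; simp
        refine ⟨y, hy, ?_⟩
        rw [em, pa_of_concat hz]
      · have hx : x.1 ≠ [] := by rw [hz]; simp
        refine ⟨x, hx, ?_⟩
        rw [em, pa_of_concat hz, Sym2.eq_swap]

lemma ncard_univ_bt :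
    (Set.univ : Set (BTVert c l)).ncard = ∑ j ∈ Finset.range (l + 2), (gen c l j).ncard := by
  have h1 := partition_ncard (c := c) (l := l) Set.univ (l + 1)
  have h2 : (Set.univ : Set (BTVert c l)) ∩ {v | v.1.length ≤ l + 1} = Set.univ := by
    ext v; simp only [Set.mem_inter_iff, Set.mem_univ, true_and, Set.mem_setOf_eq]
    exact ⟨fun _ => trivial, fun _ => v.2.1⟩
  rw [h2] at h1
  rw [h1]
  exact Finset.sum_congr rfl (fun j _ => by rw [Set.univ_inter])

lemma ncard_edgeSet_bt :
    (btGraph c l).edgeSet.ncard + 1 = (Set.univ : Set (BTVert c l)).ncard := by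
  rw [← (edge_bijOn (c := c) (l := l)).image_eq,
    Set.ncard_image_of_injOn (em_injOn (S := {v : BTVert c l | v.1 ≠ []}) (fun v hv => hv))]
  have hsplit : (Set.univ : Set (BTVert c l)) = {v : BTVert c l | v.1 ≠ []} ∪ {root} := by
    ext v
    simp only [Set.mem_univ, Set.mem_union, Set.mem_setOf_eq, Set.mem_singleton_iff, true_iff]
    by_cases h : v.1 = []
    · exact Or.inr (vert_ext (by simp [root, h]))
    · exact Or.inl h
  rw [hsplit, Set.ncard_union_eq ?_ (Set.toFinite _) (Set.toFinite _), Set.ncard_singleton]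
  rw [Set.disjoint_left]
  rintro v hv hv2
  simp only [Set.mem_singleton_iff] at hv2
  exact hv (by rw [hv2]; rfl)

/-- Workhorse: in a connected subgraph, every non-minimal vertex has its parent edge. -/
lemma subtree_parent {T₀ : (btGraph c l).Subgraph} (hc : T₀.Connected)
    {r : BTVert c l} (hr : r ∈ T₀.verts) (hmin : ∀ v ∈ T₀.verts, r.1.length ≤ v.1.length)
    {u : BTVert c l} (hu : u ∈ T₀.verts) (hne : u ≠ r) :
    u.1 ≠ [] ∧ pa u ∈ T₀.verts ∧ s(pa u, u) ∈ T₀.edgeSet := by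
  have hreach : T₀.coe.Reachable ⟨u, hu⟩ ⟨r, hr⟩ := (hc : T₀.coe.Connected) ⟨u, hu⟩ ⟨r, hr⟩
  refine hreach.elim (fun p => ?_)
  set Du : Set ↥T₀.verts := {w | u.1 <+: (w : BTVert c l).1} with hDu
  have huDu : (⟨u, hu⟩ : ↥T₀.verts) ∈ Du := List.prefix_refl _
  have hrDu : (⟨r, hr⟩ : ↥T₀.verts) ∉ Du := by
    intro hpre
    have h1 : u.1.length ≤ r.1.length := hpre.length_le
    have h2 : r.1.length ≤ u.1.length := hmin u hu
    exact hne (vert_ext (hpre.eq_of_length (le_antisymm h1 h2)))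
  obtain ⟨d, _, hfst, hsnd⟩ := p.exists_boundary_dart Du huDu hrDu
  set x := d.toProd.1 with hx
  set y := d.toProd.2 with hy
  have hadj : T₀.Adj (x : BTVert c l) (y : BTVert c l) := (T₀.coe_adj x y) ▸ d.adj
  rcases T₀.adj_sub hadj with ⟨z, hz⟩ | ⟨z, hz⟩
  · exfalso
    exact hsnd (hDu ▸ (List.IsPrefix.trans hfst (hz ▸ List.prefix_append _ _)))
  · -- x = y ++ [z]
    have hyx : (y : BTVert c l).1 <+: (x : BTVert c l).1 := hz ▸ List.prefix_append _ _
    have hulen : (y : BTVert c l).1.length < u.1.length := by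
      by_contra hle
      exact hsnd (List.prefix_of_prefix_length_le hfst hyx (by omega))
    have hux : u = (x : BTVert c l) := by
      have hxlen : (x : BTVert c l).1.length = (y : BTVert c l).1.length + 1 := by
        rw [hz]; simp
      exact vert_ext (hfst.eq_of_length (le_antisymm hfst.length_le (by omega)))
    have hune : u.1 ≠ [] := by rw [hux, hz]; simp
    have hpa : pa u = (y : BTVert c l) := by rw [hux]; exact pa_of_concat hz
    refine ⟨hune, hpa ▸ y.2, ?_⟩
    rw [hpa, hux]
    exact SimpleGraph.Subgraph.mem_edgeSet.2 hadj.symm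


/-- last entry of a vertex -/
def lst (v : BTVert c l) : ℕ := v.1.getD (v.1.length - 1) 0

lemma concat_pa_lst {v : BTVert c l} (h : v.1 ≠ []) : v.1 = (pa v).1 ++ [lst v] := by
  have hpos : 0 < v.1.length := List.length_pos_iff.2 h
  have : lst v = v.1.getLast h := by
    rw [lst, List.getD_eq_getElem _ _ (by omega), List.getLast_eq_getElem]
  rw [this]
  exact (List.dropLast_append_getLast h).symm

lemma lst_lt {v : BTVert c l} (h : v.1 ≠ []) : lst v < c (v.1.length - 1) := by
  have hpos : 0 < v.1.length := List.length_pos_iff.2 h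
  exact v.2.2 (v.1.length - 1) (by omega)

section Sub

variable {T₀ : (btGraph c l).Subgraph} (hcT : T₀.Connected)
variable {r : BTVert c l} (hr : r ∈ T₀.verts)
variable (hmin : ∀ v ∈ T₀.verts, r.1.length ≤ v.1.length)

include hcT hr hmin

lemma sub_edge_bij : Set.BijOn em (T₀.verts \ {r}) T₀.edgeSet := by
  have hS : ∀ v ∈ T₀.verts \ {r}, v.1 ≠ [] := fun v hv =>
    (subtree_parent hcT hr hmin hv.1 hv.2).1
  refine ⟨?_, em_injOn hS, ?_⟩
  · intro v hv
    exact (subtree_parent hcT hr hmin hv.1 hv.2).2.2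
  · intro e he
    induction e using Sym2.ind with
    | _ x y =>
      have hadj : T₀.Adj x y := SimpleGraph.Subgraph.mem_edgeSet.1 he
      rcases T₀.adj_sub hadj with ⟨z, hz⟩ | ⟨z, hz⟩
      · have hyv : y ∈ T₀.verts := T₀.edge_vert hadj.symm
        have hxv : x ∈ T₀.verts := T₀.edge_vert hadj
        have hyr : y ≠ r := by
          intro hh
          have h1 := hmin x hxv
          have h2 : y.1.length = x.1.length + 1 := by rw [hz]; simp
          rw [hh] at h2; omega
        exact ⟨y, ⟨hyv, hyr⟩, by rw [em, pa_of_concat hz]⟩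
      · have hxv : x ∈ T₀.verts := T₀.edge_vert hadj
        have hyv : y ∈ T₀.verts := T₀.edge_vert hadj.symm
        have hxr : x ≠ r := by
          intro hh
          have h1 := hmin y hyv
          have h2 : x.1.length = y.1.length + 1 := by rw [hz]; simp
          rw [hh] at h2; omega
        exact ⟨x, ⟨hxv, hxr⟩, by rw [em, pa_of_concat hz, Sym2.eq_swap]⟩

lemma sub_edge_count : T₀.edgeSet.ncard + 1 = T₀.verts.ncard := by
  rw [← (sub_edge_bij hcT hr hmin).image_eq,
    Set.ncard_image_of_injOn (em_injOn (fun v hv =>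
      (subtree_parent hcT hr hmin hv.1 hv.2).1))]
  exact Set.ncard_diff_singleton_add_one hr (Set.toFinite _)

lemma sub_min_unique : T₀.verts ∩ gen c l r.1.length = {r} := by
  ext v
  simp only [Set.mem_inter_iff, Set.mem_singleton_iff, gen, Set.mem_setOf_eq]
  constructor
  · rintro ⟨hv, hlen⟩
    by_contra hvr
    obtain ⟨hne, hpv, -⟩ := subtree_parent hcT hr hmin hv hvr
    have := hmin _ hpv
    have h2 := pa_len v
    have h3 : 0 < v.1.length := List.length_pos_iff.2 hne
    omega
  · rintro rfl; exact ⟨hr, rfl⟩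

lemma sub_fiber {j : ℕ} (hj : r.1.length ≤ j) :
    (T₀.verts ∩ gen c l (j + 1)).ncard ≤ (T₀.verts ∩ gen c l j).ncard * c j := by
  set A := T₀.verts ∩ gen c l (j + 1) with hA
  have hmaps : ∀ v ∈ A, (pa v, lst v) ∈ (T₀.verts ∩ gen c l j) ×ˢ Set.Iio (c j) := by
    rintro v ⟨hv, hlen⟩
    have hlen' : v.1.length = j + 1 := hlen
    have hvr : v ≠ r := by
      intro hh; rw [hh] at hlen'
      omega
    obtain ⟨hne, hpv, -⟩ := subtree_parent hcT hr hmin hv hvr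
    refine ⟨⟨hpv, ?_⟩, ?_⟩
    · show (pa v).1.length = j
      rw [pa_len, hlen']; omega
    · show lst v < c j
      have := lst_lt hne
      rwa [hlen'] at this
  have hinj : Set.InjOn (fun v => (pa v, lst v)) A := by
    rintro u hu v hv huv
    have hu1 : u.1 ≠ [] := by
      rintro hemp
      have : u.1.length = j + 1 := hu.2
      rw [hemp] at this; simp at this
    have hv1 : v.1 ≠ [] := by
      rintro hemp
      have : v.1.length = j + 1 := hv.2
      rw [hemp] at this; simp at this
    obtain ⟨h1, h2⟩ := Prod.mk.injEq .. ▸ huv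
    apply vert_ext
    rw [concat_pa_lst hu1, concat_pa_lst hv1, h1, h2]
  calc A.ncard = ((fun v => (pa v, lst v)) '' A).ncard :=
        (Set.ncard_image_of_injOn hinj).symm
  _ ≤ ((T₀.verts ∩ gen c l j) ×ˢ Set.Iio (c j)).ncard :=
        Set.ncard_le_ncard (Set.image_subset_iff.2 hmaps)
          ((Set.toFinite _).prod (Set.finite_Iio _))
  _ = (T₀.verts ∩ gen c l j).ncard * c j := ncard_prod_aux _ _

lemma sub_vanish {j : ℕ} (hj : j < r.1.length) : T₀.verts ∩ gen c l j = ∅ := by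
  ext v
  simp only [Set.mem_inter_iff, gen, Set.mem_setOf_eq, Set.mem_empty_iff_false, iff_false]
  rintro ⟨hv, hlen⟩
  have := hmin v hv
  omega

end Sub

end BT

namespace BTA

open Finset

variable (c : ℕ → ℕ) (l : ℕ)

/-- number of bottom (generation-l) vertices of the full subtree rooted at generation t -/
def Bf (t : ℕ) : ℕ := ∏ i ∈ Ico t l, c i

/-- number of vertices of the full subtree rooted at generation t (generations t..l) -/
def Cf (t : ℕ) : ℕ := ∑ j ∈ Icc t l, ∏ i ∈ Ico t j, c i

variable {c l}

lemma Bf_l : Bf c l l = 1 := by simp [Bf]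

lemma Cf_l : Cf c l l = 1 := by simp [Cf]

lemma Bf_succ {t : ℕ} (ht : t < l) : Bf c l t = c t * Bf c l (t + 1) := by
  rw [Bf, Bf, ← Finset.prod_eq_prod_Ico_succ_bot ht]

lemma Cf_succ {t : ℕ} (ht : t < l) : Cf c l t = 1 + c t * Cf c l (t + 1) := by
  rw [Cf, Cf]
  have hins : Icc t l = insert t (Icc (t + 1) l) := by
    ext i; simp only [mem_Icc, mem_insert]; omega
  rw [hins, Finset.sum_insert (by simp)]
  simp only [Finset.Ico_self, Finset.prod_empty]
  congr 1
  rw [Finset.mul_sum]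
  apply Finset.sum_congr rfl
  intro j hj
  simp only [mem_Icc] at hj
  exact Finset.prod_eq_prod_Ico_succ_bot (by omega) _

lemma Bf_pos (hc : ∀ i, i < l → 1 ≤ c i) (t : ℕ) : 1 ≤ Bf c l t := by
  rw [Bf]
  exact Finset.one_le_prod' (fun i hi => hc i (mem_Ico.1 hi).2)

lemma Cf_pos (hc : ∀ i, i < l → 1 ≤ c i) {t : ℕ} (ht : t ≤ l) : 1 ≤ Cf c l t := by
  rw [Cf]
  have h1 : 1 ≤ ∏ i ∈ Ico t l, c i :=
    Finset.one_le_prod' (fun i hi => hc i (mem_Ico.1 hi).2)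
  have h2 : (∏ i ∈ Ico t l, c i) ≤ ∑ j ∈ Icc t l, ∏ i ∈ Ico t j, c i :=
    Finset.single_le_sum (f := fun j => ∏ i ∈ Ico t j, c i)
      (fun i _ => Nat.zero_le _) (by simp [mem_Icc, ht])
  omega

section LemC

variable (k : ℕ)

/-- comparison quantity `x t = (k·B_t − 1)/C_t` -/
noncomputable def xq (t : ℕ) : ℝ := ((k : ℝ) * Bf c l t - 1) / Cf c l t

/-- the threshold condition -/
def cond (t : ℕ) : Prop := k * Bf c l (t + 1) + Cf c l (t + 1) ≤ c t * Cf c l (t + 1)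

variable {k}
variable (hc : ∀ i, i < l → 1 ≤ c i)
include hc

lemma X1 {t : ℕ} (ht : t < l) (h : cond (c := c) (l := l) k t) :
    xq (c := c) (l := l) k (t + 1) < xq (c := c) (l := l) k t := by
  have hB := Bf_succ (c := c) ht
  have hC := Cf_succ (c := c) ht
  have hC1 : (1 : ℝ) ≤ Cf c l (t + 1) := by exact_mod_cast Cf_pos hc (by omega)
  have hCt : (0 : ℝ) < Cf c l t := by
    have := Cf_pos hc (le_of_lt ht); positivity
  have h' : (k : ℝ) * Bf c l (t + 1) + Cf c l (t + 1) ≤ (c t : ℝ) * Cf c l (t + 1) := by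
    exact_mod_cast h
  rw [xq, xq, div_lt_div_iff₀ (by linarith) hCt]
  have hBr : (Bf c l t : ℝ) = c t * Bf c l (t + 1) := by exact_mod_cast hB
  have hCr : (Cf c l t : ℝ) = 1 + c t * Cf c l (t + 1) := by exact_mod_cast hC
  rw [hBr, hCr]
  nlinarith [hC1, h']

lemma X2 {t : ℕ} (ht : t < l) (h : ¬ cond (c := c) (l := l) k t) :
    xq (c := c) (l := l) k t ≤ xq (c := c) (l := l) k (t + 1) := by
  have hB := Bf_succ (c := c) ht
  have hC := Cf_succ (c := c) ht
  have hC1 : (1 : ℝ) ≤ Cf c l (t + 1) := by exact_mod_cast Cf_pos hc (by omega)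
  have hCt : (0 : ℝ) < Cf c l t := by
    have := Cf_pos hc (le_of_lt ht); positivity
  rw [cond] at h
  push_neg at h
  have h2 : c t * Cf c l (t + 1) + 1 ≤ k * Bf c l (t + 1) + Cf c l (t + 1) := h
  have h' : (c t : ℝ) * Cf c l (t + 1) + 1 ≤ (k : ℝ) * Bf c l (t + 1) + Cf c l (t + 1) := by
    exact_mod_cast h2
  rw [xq, xq, div_le_div_iff₀ hCt (by linarith)]
  have hBr : (Bf c l t : ℝ) = c t * Bf c l (t + 1) := by exact_mod_cast hB
  have hCr : (Cf c l t : ℝ) = 1 + c t * Cf c l (t + 1) := by exact_mod_cast hC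
  rw [hBr, hCr]
  nlinarith [hC1, h']

variable (hmonc : ∀ i j, i ≤ j → j < l → c j ≤ c i)
include hmonc

lemma F1 {t : ℕ} (ht : t + 2 ≤ l) (h : cond (c := c) (l := l) k (t + 1)) :
    cond (c := c) (l := l) k t := by
  have hB := Bf_succ (c := c) (show t + 1 < l by omega)
  have hC := Cf_succ (c := c) (show t + 1 < l by omega)
  have hd : c (t + 1) ≤ c t := hmonc t (t + 1) (by omega) (by omega)
  have he1 : 1 ≤ c t := hc t (by omega)
  rw [cond] at h ⊢
  rw [hB, hC]
  have hA : c (t + 1) * (k * Bf c l (t + 1 + 1) + Cf c l (t + 1 + 1)) ≤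
      c (t + 1) * (c (t + 1) * Cf c l (t + 1 + 1)) := Nat.mul_le_mul_left _ h
  have hBB : c (t + 1) * (c (t + 1) * Cf c l (t + 1 + 1)) ≤
      c t * (c (t + 1) * Cf c l (t + 1 + 1)) := Nat.mul_le_mul_right _ hd
  nlinarith [hA, hBB, he1]

lemma chainC : ∀ t, t + 1 ≤ l → cond (c := c) (l := l) k t →
    xq (c := c) (l := l) k (t + 1) < xq (c := c) (l := l) k 0 := by
  intro t
  induction t with
  | zero => intro h1 h2; exact X1 hc (by omega) h2
  | succ n ih =>
    intro h1 h2
    have s1 : xq (c := c) (l := l) k (n + 2) < xq (c := c) (l := l) k (n + 1) :=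
      X1 hc (by omega) h2
    have s2 := ih (by omega) (F1 hc hmonc (by omega) h2)
    linarith

lemma lemC (hx0 : (k : ℝ) - 1 < xq (c := c) (l := l) k 0) :
    ∀ t, 1 ≤ t → t ≤ l → xq (c := c) (l := l) k t < xq (c := c) (l := l) k 0 := by
  suffices H : ∀ d t, 1 ≤ t → t ≤ l → l - t = d →
      xq (c := c) (l := l) k t < xq (c := c) (l := l) k 0 by
    intro t h1 h2; exact H (l - t) t h1 h2 rfl
  intro d
  induction d with
  | zero =>
    intro t h1 h2 h3
    have ht : t = l := by omega
    have hxl : xq (c := c) (l := l) k l = (k : ℝ) - 1 := by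
      rw [xq, Bf_l, Cf_l]; simp
    rw [ht, hxl]; exact hx0
  | succ n ih =>
    intro t h1 h2 h3
    have htl : t < l := by omega
    by_cases hcond : cond (c := c) (l := l) k t
    · obtain ⟨t', rfl⟩ : ∃ t', t = t' + 1 := ⟨t - 1, by omega⟩
      have hcond' : cond (c := c) (l := l) k t' := F1 hc hmonc (by omega) hcond
      exact chainC hc hmonc t' (by omega) hcond'
    · have s1 := X2 hc htl hcond
      have s2 := ih (t + 1) (by omega) (by omega) (by omega)
      linarith

end LemC

section Subtree

variable {t : ℕ} {w : ℕ → ℕ}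

/-- upward chain : `w j ≤ ∏_{[t,j)} c` -/
lemma AR0 (hwt : w t = 1) (hw : ∀ j, t ≤ j → j < l → w (j + 1) ≤ w j * c j) :
    ∀ j, t ≤ j → j ≤ l → w j ≤ ∏ i ∈ Ico t j, c i := by
  intro j
  induction j with
  | zero => intro h1 h2; simp_all
  | succ n ih =>
    intro h1 h2
    rcases Nat.lt_or_ge t (n + 1) with h | h
    · calc w (n + 1) ≤ w n * c n := hw n (by omega) (by omega)
      _ ≤ (∏ i ∈ Ico t n, c i) * c n :=
          Nat.mul_le_mul_right _ (ih (by omega) (by omega))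
      _ = ∏ i ∈ Ico t (n + 1), c i := (Finset.prod_Ico_succ_top (by omega) _).symm
    · have : t = n + 1 := by omega
      subst this; simp [hwt]

/-- downward chain : `w l ≤ w j ∏_{[j,l)} c` -/
lemma AR1 (hw : ∀ j, t ≤ j → j < l → w (j + 1) ≤ w j * c j) :
    ∀ j, t ≤ j → j ≤ l → w l ≤ w j * ∏ i ∈ Ico j l, c i := by
  suffices H : ∀ d j, t ≤ j → j + d = l → w l ≤ w j * ∏ i ∈ Ico j l, c i by
    intro j h1 h2; exact H (l - j) j h1 (by omega)
  intro d
  induction d with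
  | zero => intro j h1 h2; simp [show j = l by omega]
  | succ n ih =>
    intro j h1 h2
    have hjl : j < l := by omega
    calc w l ≤ w (j + 1) * ∏ i ∈ Ico (j + 1) l, c i := ih (j + 1) (by omega) (by omega)
    _ ≤ (w j * c j) * ∏ i ∈ Ico (j + 1) l, c i :=
        Nat.mul_le_mul_right _ (hw j h1 hjl)
    _ = w j * ∏ i ∈ Ico j l, c i := by
        rw [mul_assoc, ← Finset.prod_eq_prod_Ico_succ_bot hjl]

/-- claim (R): `m · C_t ≤ q · B_t` -/
lemma AR2 (htl : t ≤ l) (hw : ∀ j, t ≤ j → j < l → w (j + 1) ≤ w j * c j) :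
    w l * Cf c l t ≤ (∑ j ∈ Icc t l, w j) * Bf c l t := by
  rw [Cf, Finset.mul_sum, Finset.sum_mul]
  apply Finset.sum_le_sum
  intro j hj
  simp only [mem_Icc] at hj
  calc w l * ∏ i ∈ Ico t j, c i ≤ (w j * ∏ i ∈ Ico j l, c i) * ∏ i ∈ Ico t j, c i :=
        Nat.mul_le_mul_right _ (AR1 hw j hj.1 hj.2)
  _ = w j * Bf c l t := by
      rw [Bf, mul_assoc, mul_comm (∏ i ∈ Ico j l, c i), Finset.prod_Ico_consecutive _ hj.1 hj.2]

/-- `q ≤ C_t` -/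
lemma AR3 (hwt : w t = 1) (hw : ∀ j, t ≤ j → j < l → w (j + 1) ≤ w j * c j) (htl : t ≤ l) :
    (∑ j ∈ Icc t l, w j) ≤ Cf c l t := by
  rw [Cf]
  apply Finset.sum_le_sum
  intro j hj
  simp only [mem_Icc] at hj
  exact AR0 hwt hw j hj.1 hj.2

end Subtree

end BTA

set_option maxHeartbeats 2000000 in
theorem BTmain (c : ℕ → ℕ) (l k : ℕ) (hk : 1 ≤ k)
    (hc1 : ∀ i, i < l → 1 ≤ c i) (hcl : c l = k)
    (hmonc : ∀ i j, i ≤ j → j < l → c j ≤ c i)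
    (hratio :
      (({v : BTVert c l | v.1.length ≤ l}.ncard : ℝ) /
        ((btGraph c l).edgeSet.ncard : ℝ)) < 1 / (k : ℝ)) :
    ∀ T₀ : (btGraph c l).Subgraph,
      T₀.Connected → T₀.edgeSet.Nonempty → T₀ ≠ ⊤ →
      (({v : BTVert c l | v.1.length ≤ l}.ncard : ℝ) /
        ((btGraph c l).edgeSet.ncard : ℝ)) <
      ((T₀.verts ∩ {v | v.1.length ≤ l}).ncard : ℝ) / (T₀.edgeSet.ncard : ℝ) := by
  intro T₀ hconn hES hne
  -- global counts
  have hsum1 : ∑ j ∈ Finset.range (l + 1), (BT.gen c l j).ncard = BTA.Cf c l 0 := by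
    rw [BTA.Cf, show Finset.Icc 0 l = Finset.range (l + 1) by
      ext i; simp only [Finset.mem_Icc, Finset.mem_range]; omega]
    apply Finset.sum_congr rfl
    intro j hj
    rw [BT.ncard_gen (by simp only [Finset.mem_range] at hj; omega), Finset.range_eq_Ico]
  have hQcount : ({v : BTVert c l | v.1.length ≤ l}).ncard = BTA.Cf c l 0 := by
    have h1 := BT.partition_ncard (c := c) (l := l) Set.univ l
    rw [Set.univ_inter] at h1
    rw [h1, ← hsum1]
    exact Finset.sum_congr rfl (fun j _ => by rw [Set.univ_inter])
  have hUcount : (Set.univ : Set (BTVert c l)).ncard = BTA.Cf c l 0 + k * BTA.Bf c l 0 := by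
    rw [BT.ncard_univ_bt, Finset.sum_range_succ, hsum1]
    congr 1
    rw [BT.ncard_gen (le_refl (l + 1)), Finset.prod_range_succ, hcl, BTA.Bf,
      Finset.range_eq_Ico, mul_comm]
  have hzeta : (btGraph c l).edgeSet.ncard + 1 = BTA.Cf c l 0 + k * BTA.Bf c l 0 := by
    rw [BT.ncard_edgeSet_bt, hUcount]
  -- the minimal vertex r of T₀
  obtain ⟨v₀, hv₀⟩ := hconn.nonempty
  have hLne : {n | ∃ v ∈ T₀.verts, v.1.length = n}.Nonempty := ⟨v₀.1.length, v₀, hv₀, rfl⟩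
  obtain ⟨r, hr, hrlen⟩ := Nat.sInf_mem hLne
  have hmin : ∀ v ∈ T₀.verts, r.1.length ≤ v.1.length := by
    intro v hv
    rw [hrlen]
    exact Nat.sInf_le ⟨v, hv, rfl⟩
  set t := r.1.length with htdef
  -- t ≤ l
  have hxy : ∃ x y, T₀.Adj x y := by
    obtain ⟨e₀, he₀⟩ := hES
    revert he₀
    exact Sym2.ind (fun x y he => ⟨x, y, SimpleGraph.Subgraph.mem_edgeSet.1 he⟩) e₀
  have htl : t ≤ l := by
    obtain ⟨x, y, hxy⟩ := hxy
    have hxv : x ∈ T₀.verts := T₀.edge_vert hxy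
    have hyv : y ∈ T₀.verts := T₀.edge_vert hxy.symm
    rcases T₀.adj_sub hxy with ⟨z, hz⟩ | ⟨z, hz⟩
    · have h1 : y.1.length = x.1.length + 1 := by rw [hz]; simp
      have h2 := y.2.1
      have h3 := hmin x hxv
      omega
    · have h1 : x.1.length = y.1.length + 1 := by rw [hz]; simp
      have h2 := x.2.1
      have h3 := hmin y hyv
      omega
  -- per-generation counts of T₀
  set wf : ℕ → ℕ := fun j => (T₀.verts ∩ BT.gen c l j).ncard with hwfdef
  have hw : ∀ j, t ≤ j → wf (j + 1) ≤ wf j * c j :=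
    fun j hj => BT.sub_fiber hconn hr hmin hj
  have hw' : ∀ j, t ≤ j → j < l → wf (j + 1) ≤ wf j * c j := fun j hj _ => hw j hj
  have hwt : wf t = 1 := by
    show (T₀.verts ∩ BT.gen c l r.1.length).ncard = 1
    rw [BT.sub_min_unique hconn hr hmin]
    exact Set.ncard_singleton r
  have hw0 : ∀ j, j < t → wf j = 0 := by
    intro j hj
    show (T₀.verts ∩ BT.gen c l j).ncard = 0
    rw [BT.sub_vanish hconn hr hmin hj]
    exact Set.ncard_empty _
  have hqsum : (T₀.verts ∩ {v : BTVert c l | v.1.length ≤ l}).ncard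
      = ∑ j ∈ Finset.Icc t l, wf j := by
    rw [BT.partition_ncard]
    symm
    apply Finset.sum_subset
    · intro j hj
      simp only [Finset.mem_Icc] at hj
      simp only [Finset.mem_range]; omega
    · intro j hj hj2
      simp only [Finset.mem_Icc] at hj2
      simp only [Finset.mem_range] at hj
      exact hw0 j (by omega)
  set q := (T₀.verts ∩ {v : BTVert c l | v.1.length ≤ l}).ncard with hqdef
  set m := wf l with hmdef
  set eT := T₀.edgeSet.ncard with heTdef
  have hvcount : T₀.verts.ncard = q + wf (l + 1) := by
    have h1 := BT.partition_ncard (c := c) (l := l) T₀.verts (l + 1)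
    have h2 : T₀.verts ∩ {v : BTVert c l | v.1.length ≤ l + 1} = T₀.verts := by
      ext v
      simp only [Set.mem_inter_iff, Set.mem_setOf_eq, and_iff_left_iff_imp]
      intro _
      exact v.2.1
    rw [h2] at h1
    rw [h1, Finset.sum_range_succ]
    congr 1
    rw [hqdef, BT.partition_ncard]
  have hecount : eT + 1 = T₀.verts.ncard := BT.sub_edge_count hconn hr hmin
  have hleaf : wf (l + 1) ≤ m * k := by
    have := hw l htl
    rwa [hcl, ← hmdef] at this
  -- claim (R) and q ≤ C_t
  have hAR2 : m * BTA.Cf c l t ≤ q * BTA.Bf c l t := by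
    rw [hqsum]
    exact BTA.AR2 htl hw'
  have hAR3 : q ≤ BTA.Cf c l t := by
    rw [hqsum]
    exact BTA.AR3 hwt hw' htl
  -- scalars and positivity
  have hχ1 : 1 ≤ BTA.Cf c l 0 := BTA.Cf_pos hc1 (Nat.zero_le l)
  have hB1 : 1 ≤ BTA.Bf c l 0 := BTA.Bf_pos hc1 0
  have hkB1 : 1 ≤ k * BTA.Bf c l 0 := le_trans hk (Nat.le_mul_of_pos_right k hB1)
  have hζ1 : 1 ≤ (btGraph c l).edgeSet.ncard := by omega
  have hq1 : 1 ≤ q := by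
    rw [hqdef]
    refine (Set.ncard_pos (Set.toFinite _)).2 ⟨r, hr, ?_⟩
    exact htl
  have heT1 : 1 ≤ eT := (Set.ncard_pos (Set.toFinite _)).2 hES
  have hqχ : q ≤ BTA.Cf c l 0 := by
    rw [hqdef, ← hQcount]
    exact Set.ncard_le_ncard Set.inter_subset_right (Set.toFinite _)
  have hm' : m = (T₀.verts ∩ BT.gen c l l).ncard := rfl
  clear_value t wf q m eT
  -- from the ratio hypothesis
  rw [hQcount] at hratio ⊢
  have hζposR : (0 : ℝ) < ((btGraph c l).edgeSet.ncard : ℝ) := by exact_mod_cast hζ1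
  have hkposR : (0 : ℝ) < (k : ℝ) := by exact_mod_cast hk
  have hkχ : k * BTA.Cf c l 0 < (btGraph c l).edgeSet.ncard := by
    rw [div_lt_div_iff₀ hζposR hkposR] at hratio
    have h2 : (BTA.Cf c l 0 : ℝ) * k < 1 * ((btGraph c l).edgeSet.ncard : ℝ) := hratio
    rw [one_mul] at h2
    exact_mod_cast
      (by linarith : ((k : ℝ)) * (BTA.Cf c l 0 : ℝ) < ((btGraph c l).edgeSet.ncard : ℝ))
  have hkey : k * BTA.Cf c l 0 + 2 ≤ BTA.Cf c l 0 + k * BTA.Bf c l 0 := by omega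
  -- reduce goal to a product inequality over ℝ
  have heTposR : (0 : ℝ) < (eT : ℝ) := by exact_mod_cast heT1
  rw [div_lt_div_iff₀ hζposR heTposR]
  have hζcast : ((btGraph c l).edgeSet.ncard : ℝ) + 1
      = (BTA.Cf c l 0 : ℝ) + (k : ℝ) * (BTA.Bf c l 0 : ℝ) := by exact_mod_cast hzeta
  have hZval : ((btGraph c l).edgeSet.ncard : ℝ)
      = (BTA.Cf c l 0 : ℝ) + (k : ℝ) * (BTA.Bf c l 0 : ℝ) - 1 := by linarith
  rw [hZval]
  have heR : (eT : ℝ) + 1 ≤ (q : ℝ) + (m : ℝ) * (k : ℝ) := by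
    have h1 : eT + 1 ≤ q + m * k := by omega
    exact_mod_cast h1
  have hχposR : (0 : ℝ) < (BTA.Cf c l 0 : ℝ) := by exact_mod_cast hχ1
  have hq1R : (1 : ℝ) ≤ (q : ℝ) := by exact_mod_cast hq1
  have hkR : (1 : ℝ) ≤ (k : ℝ) := by exact_mod_cast hk
  -- case distinction
  rcases eq_or_lt_of_le hqχ with hqeq | hqlt
  · -- q = χ : T₀ contains all non-leaf vertices
    have hQeq : T₀.verts ∩ {v : BTVert c l | v.1.length ≤ l}
        = {v : BTVert c l | v.1.length ≤ l} := by
      apply Set.eq_of_subset_of_ncard_le Set.inter_subset_right _ (Set.toFinite _)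
      rw [hQcount]
      omega
    have hgenl : T₀.verts ∩ BT.gen c l l = BT.gen c l l := by
      ext v
      constructor
      · rintro ⟨-, h2⟩; exact h2
      · intro hg
        have hvq : v ∈ {v : BTVert c l | v.1.length ≤ l} := le_of_eq hg
        exact ⟨((Set.ext_iff.1 hQeq v).2 hvq).1, hg⟩
    have hmB : m = BTA.Bf c l 0 := by
      rw [hm', hgenl, BT.ncard_gen (by omega), BTA.Bf, Finset.range_eq_Ico]
    by_cases hlast : wf (l + 1) + 1 ≤ k * BTA.Bf c l 0
    · have hfin : eT + 1 ≤ (btGraph c l).edgeSet.ncard := by omega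
      have h1 : (eT : ℝ) + 1 ≤ (BTA.Cf c l 0 : ℝ) + (k : ℝ) * (BTA.Bf c l 0 : ℝ) - 1 := by
        have h2 : (eT : ℝ) + 1 ≤ ((btGraph c l).edgeSet.ncard : ℝ) := by exact_mod_cast hfin
        linarith
      have hq' : (q : ℝ) = (BTA.Cf c l 0 : ℝ) := by exact_mod_cast hqeq
      rw [hq']
      nlinarith [mul_le_mul_of_nonneg_left h1 (le_of_lt hχposR)]
    · exfalso
      push_neg at hlast
      have hwleq : wf (l + 1) = k * BTA.Bf c l 0 := by
        have h2 : wf (l + 1) ≤ m * k := hleaf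
        rw [hmB] at h2
        have h3 : BTA.Bf c l 0 * k = k * BTA.Bf c l 0 := Nat.mul_comm _ _
        omega
      have hVU : T₀.verts = Set.univ := by
        apply Set.eq_of_subset_of_ncard_le (Set.subset_univ _) _ (Set.toFinite _)
        rw [hUcount, hvcount]
        omega
      have hEe : (btGraph c l).edgeSet.ncard ≤ eT := by omega
      rw [heTdef] at hEe
      have hESeq : T₀.edgeSet = (btGraph c l).edgeSet :=
        Set.eq_of_subset_of_ncard_le T₀.edgeSet_subset hEe (Set.toFinite _)
      apply hne
      apply SimpleGraph.Subgraph.ext hVU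
      funext u v
      apply propext
      constructor
      · intro h
        exact SimpleGraph.Subgraph.top_adj.2 (T₀.adj_sub h)
      · intro h
        apply SimpleGraph.Subgraph.mem_edgeSet.1
        rw [hESeq]
        exact ((btGraph c l).mem_edgeSet).2 (SimpleGraph.Subgraph.top_adj.1 h)
  · -- q < χ
    rcases Nat.eq_zero_or_pos t with ht0 | ht1
    · -- t = 0
      have hAR2' : (m : ℝ) * (BTA.Cf c l 0 : ℝ) ≤ (q : ℝ) * (BTA.Bf c l 0 : ℝ) := by
        rw [ht0] at hAR2
        exact_mod_cast hAR2
      have hqltR : (q : ℝ) + 1 ≤ (BTA.Cf c l 0 : ℝ) := by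
        have : q + 1 ≤ BTA.Cf c l 0 := hqlt
        exact_mod_cast this
      nlinarith [mul_le_mul_of_nonneg_left heR (le_of_lt hχposR),
        mul_le_mul_of_nonneg_left hAR2' (le_of_lt hkposR)]
    · -- t ≥ 1 : use Lemma C
      have hCftpos : 1 ≤ BTA.Cf c l t := BTA.Cf_pos hc1 htl
      have hCfposR : (0 : ℝ) < (BTA.Cf c l t : ℝ) := by exact_mod_cast hCftpos
      have hx0 : (k : ℝ) - 1 < BTA.xq (c := c) (l := l) k 0 := by
        rw [BTA.xq, lt_div_iff₀ hχposR]
        have hkeyR : (k : ℝ) * (BTA.Cf c l 0 : ℝ) + 2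
            ≤ (BTA.Cf c l 0 : ℝ) + (k : ℝ) * (BTA.Bf c l 0 : ℝ) := by exact_mod_cast hkey
        nlinarith [hkeyR]
      have hxt := BTA.lemC hc1 hmonc hx0 t ht1 htl
      have hcross : ((k : ℝ) * (BTA.Bf c l t : ℝ) - 1) * (BTA.Cf c l 0 : ℝ)
          < ((k : ℝ) * (BTA.Bf c l 0 : ℝ) - 1) * (BTA.Cf c l t : ℝ) := by
        rw [BTA.xq, BTA.xq, div_lt_div_iff₀ hCfposR hχposR] at hxt
        exact hxt
      have hAR2R : (m : ℝ) * (BTA.Cf c l t : ℝ) ≤ (q : ℝ) * (BTA.Bf c l t : ℝ) := by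
        exact_mod_cast hAR2
      have hAR3R : (q : ℝ) ≤ (BTA.Cf c l t : ℝ) := by exact_mod_cast hAR3
      have H : ((BTA.Cf c l 0 : ℝ) * (eT : ℝ)) * (BTA.Cf c l t : ℝ)
          < ((q : ℝ) * ((BTA.Cf c l 0 : ℝ) + (k : ℝ) * (BTA.Bf c l 0 : ℝ) - 1))
            * (BTA.Cf c l t : ℝ) := by
        nlinarith [mul_le_mul_of_nonneg_right
            (mul_le_mul_of_nonneg_left heR (le_of_lt hχposR)) (le_of_lt hCfposR),
          mul_le_mul_of_nonneg_left hAR2R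
            (by positivity : (0 : ℝ) ≤ (k : ℝ) * (BTA.Cf c l 0 : ℝ)),
          mul_lt_mul_of_pos_left hcross (show (0 : ℝ) < (q : ℝ) by linarith),
          mul_le_mul_of_nonneg_left hAR3R (le_of_lt hχposR)]
      exact lt_of_mul_lt_mul_right H (le_of_lt hCfposR)

theorem stmt14 (k l : ℕ) (hk : 1 ≤ k) (a : ℕ → ℕ)
    (hpos : ∀ i, 1 ≤ i → i ≤ l → 0 < a i)
    (hmono : ∀ i j, 1 ≤ i → i ≤ j → j ≤ l → a i ≤ a j)
    (hratio :
      (({v : BTVert (fun i => if i < l then a (l - i) else k) l |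
          v.1.length ≤ l}.ncard : ℝ) /
        ((btGraph (fun i => if i < l then a (l - i) else k) l).edgeSet.ncard : ℝ)) <
      1 / (k : ℝ)) :
    ∀ T₀ : (btGraph (fun i => if i < l then a (l - i) else k) l).Subgraph,
      T₀.Connected → T₀.edgeSet.Nonempty → T₀ ≠ ⊤ →
      (({v : BTVert (fun i => if i < l then a (l - i) else k) l |
          v.1.length ≤ l}.ncard : ℝ) /
        ((btGraph (fun i => if i < l then a (l - i) else k) l).edgeSet.ncard : ℝ)) <
      ((T₀.verts ∩ {v | v.1.length ≤ l}).ncard : ℝ) / (T₀.edgeSet.ncard : ℝ) := by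
  apply BTmain (fun i => if i < l then a (l - i) else k) l k hk
  · intro i hi
    simp only [if_pos hi]
    exact hpos (l - i) (by omega) (by omega)
  · simp
  · intro i j hij hjl
    simp only [if_pos hjl, if_pos (show i < l by omega)]
    exact hmono (l - j) (l - i) (by omega) (by omega) (by omega)
  · exact hratio
end

section
/- Let k ≥ 1 be an integer and let n_0 = 1 ≤ n_1 ≤ n_2 ≤ … ≤ n_l be positive integers. For 0 ≤ j ≤ l define r_j = (Σ_{i=0}^{j} 1/(n_1⋯n_i)) / (k + Σ_{i=0}^{j−1} 1/(n_1⋯n_i)), where the empty product n_1⋯n_0-term is 1/(n_1⋯n_0) = 1 and the sum in the denominator is empty when j = 0 (so r_0 = 1/k). If r_0 > r_l, then r_j > r_l for every 0 ≤ j ≤ l−1. -/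
/-- `partialProd a i = n₁ n₂ ⋯ n_i` (as a real number), the product of `a 1, …, a i`,
with the empty product (`i = 0`) equal to `1`. -/
noncomputable def partialProd (a : ℕ → ℕ) (i : ℕ) : ℝ :=
  ∏ t ∈ Finset.Icc 1 i, (a t : ℝ)

/-- `rSeq k a j = (Σ_{i=0}^{j} 1/(n₁⋯n_i)) / (k + Σ_{i=0}^{j-1} 1/(n₁⋯n_i))`. -/
noncomputable def rSeq (k : ℕ) (a : ℕ → ℕ) (j : ℕ) : ℝ :=
  (∑ i ∈ Finset.range (j + 1), 1 / partialProd a i) /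
    ((k : ℝ) + ∑ i ∈ Finset.range j, 1 / partialProd a i)

noncomputable def Sp (a : ℕ → ℕ) (m : ℕ) : ℝ :=
  ∑ i ∈ Finset.range m, 1 / partialProd a i

lemma rSeq_eq (k : ℕ) (a : ℕ → ℕ) (j : ℕ) :
    rSeq k a j = Sp a (j + 1) / ((k : ℝ) + Sp a j) := rfl

theorem stmt15 (k : ℕ) (hk : 0 < k) (l : ℕ) (a : ℕ → ℕ)
    (ha0 : a 0 = 1) (hpos : ∀ i, 0 < a i)
    (hmono : ∀ i, i < l → a i ≤ a (i + 1))
    (hlt : rSeq k a l < rSeq k a 0) :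
    ∀ j, j < l → rSeq k a l < rSeq k a j := by
  intro j hj
  have hPpos : ∀ i, (0:ℝ) < partialProd a i := by
    intro i
    exact Finset.prod_pos fun t _ => by exact_mod_cast hpos t
  have hppos : ∀ i, (0:ℝ) < 1 / partialProd a i := fun i => one_div_pos.2 (hPpos i)
  have hSnonneg : ∀ m, 0 ≤ Sp a m := fun m => Finset.sum_nonneg fun i _ => (hppos i).le
  have hB : ∀ m, (0:ℝ) < (k : ℝ) + Sp a m := fun m =>
    add_pos_of_pos_of_nonneg (by exact_mod_cast hk) (hSnonneg m)
  have hS0 : Sp a 0 = 0 := Finset.sum_range_zero _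
  have hP0 : partialProd a 0 = 1 := by
    unfold partialProd; simp
  have hS1 : Sp a 1 = 1 := by
    unfold Sp; simp [hP0]
  have hIco : ∀ {m n : ℕ}, m ≤ n →
      Sp a n - Sp a m = ∑ i ∈ Finset.Ico m n, 1 / partialProd a i := by
    intro m n h
    exact (Finset.sum_Ico_eq_sub _ h).symm
  have hDj : 0 < Sp a l - Sp a j := by
    rw [hIco hj.le]
    exact Finset.sum_pos (fun i _ => hppos i) ⟨j, Finset.mem_Ico.mpr ⟨le_refl j, hj⟩⟩
  have hD0 : 0 < Sp a l - Sp a 0 := by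
    rw [hIco (Nat.zero_le l)]
    exact Finset.sum_pos (fun i _ => hppos i)
      ⟨j, Finset.mem_Ico.mpr ⟨Nat.zero_le j, hj⟩⟩
  have hPstep : ∀ i, partialProd a (i + 1) = partialProd a i * a (i + 1) := by
    intro i
    unfold partialProd
    rw [Finset.prod_Icc_succ_top (Nat.succ_le_succ (Nat.zero_le i))]
  have amono : ∀ s t, s ≤ t → t ≤ l → a s ≤ a t := by
    intro s t hst htl
    induction t, hst using Nat.le_induction with
    | base => exact le_refl _
    | succ n hn ih => exact (ih (by omega)).trans (hmono n (by omega))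
  -- Chebyshev-type key inequality
  have hK : (Sp a (l+1) - Sp a (j+1)) * (Sp a l - Sp a 0) ≤
      (Sp a (l+1) - Sp a 1) * (Sp a l - Sp a j) := by
    rw [hIco (by omega), hIco (by omega), hIco (by omega), hIco (by omega)]
    have hshift : ∀ m n : ℕ,
        ∑ i ∈ Finset.Ico (m+1) (n+1), 1 / partialProd a i
          = ∑ i ∈ Finset.Ico m n, 1 / partialProd a (i+1) := by
      intro m n
      rw [Finset.sum_Ico_eq_sum_range, Finset.sum_Ico_eq_sum_range]
      have h1 : n + 1 - (m + 1) = n - m := by omega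
      rw [h1]
      exact Finset.sum_congr rfl fun i _ => by rw [show m + 1 + i = m + i + 1 by omega]
    rw [show (1:ℕ) = 0 + 1 from rfl, hshift j l, hshift 0 l]
    have hsplitP : (∑ i ∈ Finset.Ico 0 j, 1 / partialProd a i)
        + (∑ i ∈ Finset.Ico j l, 1 / partialProd a i)
        = ∑ i ∈ Finset.Ico 0 l, 1 / partialProd a i :=
      Finset.sum_Ico_consecutive _ (Nat.zero_le j) hj.le
    have hsplitQ : (∑ i ∈ Finset.Ico 0 j, 1 / partialProd a (i+1))
        + (∑ i ∈ Finset.Ico j l, 1 / partialProd a (i+1))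
        = ∑ i ∈ Finset.Ico 0 l, 1 / partialProd a (i+1) :=
      Finset.sum_Ico_consecutive _ (Nat.zero_le j) hj.le
    rw [← hsplitP, ← hsplitQ]
    have hXY : (∑ s ∈ Finset.Ico j l, 1 / partialProd a (s+1))
        * (∑ t ∈ Finset.Ico 0 j, 1 / partialProd a t)
        ≤ (∑ s ∈ Finset.Ico j l, 1 / partialProd a s)
        * (∑ t ∈ Finset.Ico 0 j, 1 / partialProd a (t+1)) := by
      rw [Finset.sum_mul_sum, Finset.sum_mul_sum]
      apply Finset.sum_le_sum
      intro s hs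
      apply Finset.sum_le_sum
      intro t ht
      have hs' := Finset.mem_Ico.mp hs
      have ht' := Finset.mem_Ico.mp ht
      have hst : (a (t+1) : ℝ) ≤ (a (s+1) : ℝ) := by
        exact_mod_cast amono (t+1) (s+1) (by omega) (by omega)
      have hterm : partialProd a s * partialProd a (t+1)
          ≤ partialProd a (s+1) * partialProd a t := by
        rw [hPstep s, hPstep t]
        nlinarith [mul_pos (hPpos s) (hPpos t), hst]
      rw [div_mul_div_comm, div_mul_div_comm, one_mul]
      exact one_div_le_one_div_of_le (mul_pos (hPpos s) (hPpos (t+1))) hterm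
    nlinarith [hXY, Finset.sum_pos (fun i (_ : i ∈ Finset.Ico j l) => hppos i)
        ⟨j, Finset.mem_Ico.mpr ⟨le_refl j, hj⟩⟩,
      Finset.sum_pos (fun i (_ : i ∈ Finset.Ico j l) => hppos (i+1))
        ⟨j, Finset.mem_Ico.mpr ⟨le_refl j, hj⟩⟩]
  -- now the mediant/cross-multiplication argument
  rw [rSeq_eq, rSeq_eq] at hlt ⊢
  rw [div_lt_div_iff₀ (hB l) (hB 0)] at hlt
  rw [div_lt_div_iff₀ (hB l) (hB j)]
  rw [hS0, hS1] at hlt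
  have key1 : (Sp a (l+1) - Sp a 1) * ((k:ℝ) + Sp a l)
      < Sp a (l+1) * (Sp a l - Sp a 0) := by
    rw [hS0, hS1]; nlinarith [hlt]
  have key2 : (Sp a (l+1) - Sp a (j+1)) * ((k:ℝ) + Sp a l) * (Sp a l - Sp a 0)
      < Sp a (l+1) * (Sp a l - Sp a j) * (Sp a l - Sp a 0) := by
    nlinarith [mul_le_mul_of_nonneg_right hK (hB l).le,
      mul_lt_mul_of_pos_right key1 hDj]
  have key3 : (Sp a (l+1) - Sp a (j+1)) * ((k:ℝ) + Sp a l)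
      < Sp a (l+1) * (Sp a l - Sp a j) := (mul_lt_mul_iff_of_pos_right hD0).mp key2
  nlinarith [key3]
end

section
/- Fix α ∈ (1/2, 1) and a constant ρ > 1/(2α−1). Let B_n be a binomial random variable with n(n−1)/2 trials and success probability n^{−2α}. Then n! · P[B_n ≥ ρn] → 0 as n → ∞. -/
open MeasureTheory Filter

noncomputable def bernoulliBool (p : ℝ) : Measure Bool :=
  ENNReal.ofReal p • Measure.dirac true + ENNReal.ofReal (1 - p) • Measure.dirac false

/-- The law of a binomial random variable with `m` independent trials,
each succeeding with probability `p`: the pushforward of the product Bernoulli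
measure under the count of successes. -/
noncomputable def binomialMeasure (m : ℕ) (p : ℝ) : Measure ℕ :=
  (Measure.pi fun _ : Fin m => bernoulliBool p).map
    (fun f => Set.ncard {i | f i = true})

instance (p : ℝ) : IsFiniteMeasure (bernoulliBool p) := by
  constructor
  rw [bernoulliBool]
  simp only [Measure.coe_add, Pi.add_apply, Measure.smul_apply, smul_eq_mul]
  exact ENNReal.add_lt_top.2 ⟨by simp [ENNReal.mul_lt_top, ENNReal.ofReal_lt_top],
    by simp [ENNReal.mul_lt_top, ENNReal.ofReal_lt_top]⟩

lemma bernoulli_true (p : ℝ) : bernoulliBool p {true} = ENNReal.ofReal p := by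
  simp [bernoulliBool, Measure.dirac_apply]

lemma bernoulli_univ (p : ℝ) (hp0 : 0 ≤ p) (hp1 : p ≤ 1) :
    bernoulliBool p Set.univ = 1 := by
  simp [bernoulliBool, ← ENNReal.ofReal_add hp0 (by linarith : (0:ℝ) ≤ 1 - p)]

open Finset in
lemma binomial_tail_le (m k : ℕ) (p : ℝ) (hp0 : 0 ≤ p) (hp1 : p ≤ 1) :
    binomialMeasure m p {j : ℕ | k ≤ j} ≤ (m.choose k : ENNReal) * ENNReal.ofReal p ^ k := by
  classical
  have hmeas : Measurable (fun f : Fin m → Bool => Set.ncard {i | f i = true}) :=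
    measurable_of_countable _
  rw [binomialMeasure, Measure.map_apply hmeas (by trivial)]
  calc (Measure.pi fun _ : Fin m => bernoulliBool p)
        ((fun f : Fin m → Bool => Set.ncard {i | f i = true}) ⁻¹' {j | k ≤ j})
      ≤ (Measure.pi fun _ : Fin m => bernoulliBool p)
        (⋃ S ∈ Finset.univ.powersetCard k, {f : Fin m → Bool | ∀ i ∈ S, f i = true}) := by
        apply measure_mono
        intro f hf
        simp only [Set.mem_preimage, Set.mem_setOf_eq] at hf
        rw [Set.ncard_eq_toFinset_card'] at hf
        obtain ⟨T, hTsub, hTcard⟩ := Finset.exists_subset_card_eq hf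
        simp only [Set.mem_iUnion]
        refine ⟨T, ?_, fun i hi => ?_⟩
        · exact Finset.mem_powersetCard.2 ⟨Finset.subset_univ _, hTcard⟩
        · have := hTsub hi
          simpa using this
    _ ≤ ∑ S ∈ Finset.univ.powersetCard k,
        (Measure.pi fun _ : Fin m => bernoulliBool p) {f : Fin m → Bool | ∀ i ∈ S, f i = true} :=
        measure_biUnion_finset_le _ _
    _ = ∑ S ∈ Finset.univ.powersetCard k, ENNReal.ofReal p ^ k := by
        refine Finset.sum_congr rfl fun S hS => ?_
        have hcard : S.card = k := (Finset.mem_powersetCard.1 hS).2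
        have hset : {f : Fin m → Bool | ∀ i ∈ S, f i = true}
            = Set.pi Set.univ (fun i => if i ∈ S then {true} else Set.univ) := by
          ext f
          simp only [Set.mem_setOf_eq, Set.mem_pi, Set.mem_univ, forall_true_left]
          constructor
          · intro h i
            by_cases hi : i ∈ S <;> simp [hi, h]
          · intro h i hi
            have := h i
            simpa [hi] using this
        rw [hset, Measure.pi_pi]
        have : ∀ i : Fin m, bernoulliBool p (if i ∈ S then ({true} : Set Bool) else Set.univ)
            = (if i ∈ S then ENNReal.ofReal p else 1) := by
          intro i
          by_cases hi : i ∈ S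
          · rw [if_pos hi, if_pos hi, bernoulli_true]
          · rw [if_neg hi, if_neg hi, bernoulli_univ p hp0 hp1]
        rw [Finset.prod_congr rfl fun i _ => this i, Finset.prod_ite_mem Finset.univ S
          (fun _ => ENNReal.ofReal p), Finset.univ_inter, Finset.prod_const, hcard]
    _ = (m.choose k : ENNReal) * ENNReal.ofReal p ^ k := by
        rw [Finset.sum_const, Finset.card_powersetCard, Finset.card_univ, Fintype.card_fin,
          nsmul_eq_mul]


lemma real_tendsto (α ρ : ℝ) (hα₁ : 1 / 2 < α) (hα₂ : α < 1) (hρ : 1 / (2 * α - 1) < ρ) :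
    Filter.Tendsto (fun n : ℕ => (n.factorial : ℝ) * ((n * (n - 1) / 2).choose ⌈ρ * (n : ℝ)⌉₊ : ℝ)
      * ((n : ℝ) ^ (-(2 * α))) ^ ⌈ρ * (n : ℝ)⌉₊) atTop (nhds 0) := by
  have h2α : 0 < 2 * α - 1 := by linarith
  have hρ1 : 1 < ρ := lt_trans (one_lt_one_div h2α (by linarith)) hρ
  have hρ0 : 0 < ρ := by linarith
  have hδ : 1 < ρ * (2 * α - 1) := (div_lt_iff₀ h2α).1 hρ
  set g : ℕ → ℝ := fun n => (n : ℝ) * ((1 - ρ * (2 * α - 1)) * Real.log n + ρ * (1 - Real.log ρ))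
    with hg_def
  have hlog : Tendsto (fun n : ℕ => Real.log n) atTop atTop :=
    Real.tendsto_log_atTop.comp tendsto_natCast_atTop_atTop
  have hinner : Tendsto (fun n : ℕ => (1 - ρ * (2 * α - 1)) * Real.log n + ρ * (1 - Real.log ρ))
      atTop atBot :=
    tendsto_atBot_add_const_right _ _ ((tendsto_const_mul_atBot_of_neg (by linarith)).2 hlog)
  have hg : Tendsto g atTop atBot := tendsto_natCast_atTop_atTop.atTop_mul_atBot₀ hinner
  have hexp : Tendsto (fun n : ℕ => Real.exp (g n)) atTop (nhds 0) :=
    Real.tendsto_exp_atBot.comp hg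
  have hc : Tendsto (fun n : ℕ => (1 - 2 * α) * Real.log n + (1 - Real.log ρ)) atTop atBot :=
    tendsto_atBot_add_const_right _ _ ((tendsto_const_mul_atBot_of_neg (by linarith)).2 hlog)
  have hcle : ∀ᶠ n : ℕ in atTop, (1 - 2 * α) * Real.log n + (1 - Real.log ρ) ≤ 0 :=
    hc.eventually_le_atBot 0
  have hub : ∀ᶠ n : ℕ in atTop, (n.factorial : ℝ) * ((n * (n - 1) / 2).choose ⌈ρ * (n : ℝ)⌉₊ : ℝ)
      * ((n : ℝ) ^ (-(2 * α))) ^ ⌈ρ * (n : ℝ)⌉₊ ≤ Real.exp (g n) := by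
    filter_upwards [hcle, eventually_ge_atTop 1] with n hcn hn1
    set x : ℝ := (n : ℝ) with hx_def
    have hx1 : (1 : ℝ) ≤ x := by rw [hx_def]; exact_mod_cast hn1
    have hx0 : (0 : ℝ) < x := by linarith
    set K : ℕ := ⌈ρ * x⌉₊ with hK_def
    have hK : ρ * x ≤ (K : ℝ) := Nat.le_ceil _
    have hρx : (1 : ℝ) ≤ ρ * x := by nlinarith
    have hK1 : (1 : ℝ) ≤ (K : ℝ) := le_trans hρx hK
    set m : ℕ := n * (n - 1) / 2 with hm_def
    have hm : (m : ℝ) ≤ x ^ 2 := by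
      have h1 : m ≤ n * n := le_trans (Nat.div_le_self _ _)
        (Nat.mul_le_mul_left _ (Nat.sub_le _ _))
      calc (m : ℝ) ≤ (n * n : ℕ) := by exact_mod_cast h1
        _ = x ^ 2 := by push_cast; ring
    set q : ℝ := x ^ (-(2 * α)) with hq_def
    have hq0 : 0 ≤ q := Real.rpow_nonneg hx0.le _
    have hfac : (1 : ℝ) / K.factorial ≤ Real.exp K / (ρ * x) ^ K := by
      rw [div_le_div_iff₀ (by positivity) (by positivity)]
      calc (1 : ℝ) * (ρ * x) ^ K = (ρ * x) ^ K := one_mul _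
        _ ≤ (K : ℝ) ^ K := pow_le_pow_left₀ (by positivity) hK K
        _ ≤ Real.exp K * K.factorial := by
            have := Real.pow_div_factorial_le_exp (x := (K : ℝ)) (by positivity) K
            rwa [div_le_iff₀ (by positivity)] at this
    have hchoose : ((m.choose K : ℕ) : ℝ) ≤ (x ^ 2) ^ K / K.factorial := by
      calc ((m.choose K : ℕ) : ℝ) ≤ (m : ℝ) ^ K / K.factorial := Nat.choose_le_pow_div K m
        _ ≤ (x ^ 2) ^ K / K.factorial := by gcongr
    have hfact : (n.factorial : ℝ) ≤ x ^ n := by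
      calc (n.factorial : ℝ) ≤ ((n ^ n : ℕ) : ℝ) := by exact_mod_cast n.factorial_le_pow
        _ = x ^ n := by push_cast; rfl
    have key : (n.factorial : ℝ) * (m.choose K : ℝ) * q ^ K
        ≤ x ^ n * (x ^ 2) ^ K * q ^ K * (Real.exp K / (ρ * x) ^ K) := by
      calc (n.factorial : ℝ) * (m.choose K : ℝ) * q ^ K
          ≤ x ^ n * ((x ^ 2) ^ K / K.factorial) * q ^ K :=
            mul_le_mul (mul_le_mul hfact hchoose (by positivity) (by positivity)) le_rfl
              (by positivity) (by positivity)
        _ = x ^ n * (x ^ 2) ^ K * q ^ K * ((1 : ℝ) / K.factorial) := by ring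
        _ ≤ x ^ n * (x ^ 2) ^ K * q ^ K * (Real.exp K / (ρ * x) ^ K) :=
            mul_le_mul_of_nonneg_left hfac (by positivity)
    have hBexp : x ^ n * (x ^ 2) ^ K * q ^ K * (Real.exp K / (ρ * x) ^ K)
        = Real.exp ((n : ℝ) * Real.log x + (K : ℝ) * (2 * Real.log x)
            + (K : ℝ) * (Real.log x * (-(2 * α))) + (K : ℝ)
            - (K : ℝ) * (Real.log ρ + Real.log x)) := by
      have e1 : x ^ n = Real.exp ((n : ℝ) * Real.log x) := by
        rw [← Real.log_pow, Real.exp_log (pow_pos hx0 n)]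
      have e2 : (x ^ 2) ^ K = Real.exp ((K : ℝ) * (2 * Real.log x)) := by
        rw [Real.exp_nat_mul]
        congr 1
        rw [← Real.exp_log (pow_pos hx0 2)]
        congr 1
        rw [Real.log_pow]
        norm_num
      have e3 : q ^ K = Real.exp ((K : ℝ) * (Real.log x * (-(2 * α)))) := by
        rw [Real.exp_nat_mul, hq_def, Real.rpow_def_of_pos hx0]
      have e4 : (ρ * x) ^ K = Real.exp ((K : ℝ) * (Real.log ρ + Real.log x)) := by
        rw [Real.exp_nat_mul, ← Real.log_mul (ne_of_gt hρ0) (ne_of_gt hx0),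
          Real.exp_log (by positivity)]
      rw [e1, e2, e3, e4, div_eq_mul_inv, ← Real.exp_neg]
      simp only [← Real.exp_add]
      congr 1
      ring
    have hE : (n : ℝ) * Real.log x + (K : ℝ) * (2 * Real.log x)
        + (K : ℝ) * (Real.log x * (-(2 * α))) + (K : ℝ)
        - (K : ℝ) * (Real.log ρ + Real.log x) ≤ g n := by
      have hrw : (n : ℝ) * Real.log x + (K : ℝ) * (2 * Real.log x)
          + (K : ℝ) * (Real.log x * (-(2 * α))) + (K : ℝ)
          - (K : ℝ) * (Real.log ρ + Real.log x)
          = x * Real.log x + (K : ℝ) * ((1 - 2 * α) * Real.log x + (1 - Real.log ρ)) := by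
        rw [← hx_def]; ring
      have hmul : (K : ℝ) * ((1 - 2 * α) * Real.log x + (1 - Real.log ρ))
          ≤ (ρ * x) * ((1 - 2 * α) * Real.log x + (1 - Real.log ρ)) :=
        mul_le_mul_of_nonpos_right hK hcn
      have hgeq : x * Real.log x + (ρ * x) * ((1 - 2 * α) * Real.log x + (1 - Real.log ρ))
          = g n := by
        simp only [hg_def]
        rw [← hx_def]; ring
      rw [hrw, ← hgeq]
      linarith [hmul]
    calc (n.factorial : ℝ) * (m.choose K : ℝ) * q ^ K
        ≤ x ^ n * (x ^ 2) ^ K * q ^ K * (Real.exp K / (ρ * x) ^ K) := key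
      _ = Real.exp _ := hBexp
      _ ≤ Real.exp (g n) := Real.exp_le_exp.2 hE
  have hlb : ∀ᶠ n : ℕ in atTop, (0 : ℝ) ≤ (n.factorial : ℝ)
      * ((n * (n - 1) / 2).choose ⌈ρ * (n : ℝ)⌉₊ : ℝ)
      * ((n : ℝ) ^ (-(2 * α))) ^ ⌈ρ * (n : ℝ)⌉₊ :=
    Filter.Eventually.of_forall fun n => by positivity
  exact squeeze_zero' hlb hub hexp

theorem stmt16 (α ρ : ℝ) (hα₁ : 1 / 2 < α) (hα₂ : α < 1) (hρ : 1 / (2 * α - 1) < ρ) :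
    Tendsto
      (fun n : ℕ =>
        (n.factorial : ENNReal) *
          binomialMeasure (n * (n - 1) / 2) ((n : ℝ) ^ (-(2 * α)))
            {k : ℕ | ρ * (n : ℝ) ≤ (k : ℝ)})
      atTop (nhds 0) := by
  have h2α : (0:ℝ) < 2 * α - 1 := by linarith
  have hp0 : ∀ n : ℕ, 0 ≤ (n : ℝ) ^ (-(2 * α)) := fun n =>
    Real.rpow_nonneg (Nat.cast_nonneg n) _
  have hp1 : ∀ n : ℕ, (n : ℝ) ^ (-(2 * α)) ≤ 1 := by
    intro n
    rcases Nat.eq_zero_or_pos n with h | h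
    · subst h
      rw [Nat.cast_zero, Real.zero_rpow (by linarith : -(2 * α) ≠ 0)]
      norm_num
    · exact Real.rpow_le_one_of_one_le_of_nonpos (by exact_mod_cast h) (by linarith)
  have hle : ∀ n : ℕ, (n.factorial : ENNReal) *
      binomialMeasure (n * (n - 1) / 2) ((n : ℝ) ^ (-(2 * α))) {k : ℕ | ρ * (n : ℝ) ≤ (k : ℝ)}
      ≤ ENNReal.ofReal ((n.factorial : ℝ) * ((n * (n - 1) / 2).choose ⌈ρ * (n : ℝ)⌉₊ : ℝ)
        * ((n : ℝ) ^ (-(2 * α))) ^ ⌈ρ * (n : ℝ)⌉₊) := by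
    intro n
    have hsub : {k : ℕ | ρ * (n : ℝ) ≤ (k : ℝ)} ⊆ {j : ℕ | ⌈ρ * (n : ℝ)⌉₊ ≤ j} :=
      fun k hk => Nat.ceil_le.2 hk
    calc (n.factorial : ENNReal) *
        binomialMeasure (n * (n - 1) / 2) ((n : ℝ) ^ (-(2 * α))) {k : ℕ | ρ * (n : ℝ) ≤ (k : ℝ)}
        ≤ (n.factorial : ENNReal) * (((n * (n - 1) / 2).choose ⌈ρ * (n : ℝ)⌉₊ : ENNReal)
            * ENNReal.ofReal ((n : ℝ) ^ (-(2 * α))) ^ ⌈ρ * (n : ℝ)⌉₊) :=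
          mul_le_mul_right (le_trans (measure_mono hsub)
            (binomial_tail_le _ _ _ (hp0 n) (hp1 n))) _
      _ = ENNReal.ofReal ((n.factorial : ℝ) * ((n * (n - 1) / 2).choose ⌈ρ * (n : ℝ)⌉₊ : ℝ)
            * ((n : ℝ) ^ (-(2 * α))) ^ ⌈ρ * (n : ℝ)⌉₊) := by
          rw [ENNReal.ofReal_mul (by positivity), ENNReal.ofReal_mul (by positivity),
            ENNReal.ofReal_pow (hp0 n), ENNReal.ofReal_natCast, ENNReal.ofReal_natCast, mul_assoc]
  have hofreal := ENNReal.tendsto_ofReal (real_tendsto α ρ hα₁ hα₂ hρ)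
  rw [ENNReal.ofReal_zero] at hofreal
  exact tendsto_of_tendsto_of_tendsto_of_le_of_le tendsto_const_nhds hofreal
    (fun n => zero_le) hle
end

section
/- Fix a constant α ∈ (0, 1/2) and let p = n^{−α}. Then for every δ > 0, the probability that every permutation π of [n] satisfies |Overlap(π) − n²p²/2| ≤ δ·n²p² tends to 1 as n → ∞. -/
open MeasureTheory Filter

noncomputable def erMeasure (n : ℕ) (p : ℝ) : Measure (Fin n → Fin n → Bool) :=
  Measure.pi fun _ => Measure.pi fun _ => bernoulliBool p

noncomputable def erPair (n : ℕ) (p : ℝ) :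
    Measure ((Fin n → Fin n → Bool) × (Fin n → Fin n → Bool)) :=
  (erMeasure n p).prod (erMeasure n p)

/-- `overlap G G' π` : the number of pairs `i < j` such that `{i,j}` is an edge of `G`
and `{π i, π j}` is an edge of `G'` (edges are encoded by the Boolean value at the
ordered pair `i < j`). -/
noncomputable def overlap {n : ℕ} (G G' : Fin n → Fin n → Bool) (π : Equiv.Perm (Fin n)) : ℕ :=
  Set.ncard {e : Fin n × Fin n | e.1 < e.2 ∧ G e.1 e.2 = true ∧
    ((π e.1 < π e.2 ∧ G' (π e.1) (π e.2) = true) ∨ (π e.2 < π e.1 ∧ G' (π e.2) (π e.1) = true))}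

noncomputable def maxOverlap {n : ℕ} (G G' : Fin n → Fin n → Bool) : ℕ :=
  Finset.univ.sup fun π : Equiv.Perm (Fin n) => overlap G G' π

namespace RGM

/-- weight of a Bernoulli bit -/
def w (p : ℝ) : Bool → ℝ := fun b => if b then p else 1 - p

lemma w_true (p : ℝ) : w p true = p := rfl
lemma w_false (p : ℝ) : w p false = 1 - p := rfl
lemma w_nonneg {p : ℝ} (h0 : 0 ≤ p) (h1 : p ≤ 1) : ∀ b, 0 ≤ w p b := by
  intro b; cases b <;> simp [w] <;> linarith
lemma w_sum (p : ℝ) : w p true + w p false = 1 := by simp [w]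

/-- Master interchange lemma. -/
lemma master {A E : Type*} [Fintype A] [DecidableEq A] [Fintype E] [DecidableEq E]
    (wt : Bool → ℝ) (hw : wt true + wt false = 1)
    (c : E → A) (hc : Function.Injective c) (h : E → Bool → ℝ) :
    ∑ g : A → Bool, ((∏ a, wt (g a)) * ∏ e, h e (g (c e)))
      = ∏ e, (wt true * h e true + wt false * h e false) := by
  classical
  set img : Finset A := Finset.univ.image c with himg
  have hmem : ∀ a, a ∈ img ↔ ∃ e, c e = a := by
    intro a; simp [himg]
  -- the auxiliary factor
  set F : A → Bool → ℝ := fun a b => wt b * (if ha : ∃ e, c e = a then h ha.choose b else 1)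
    with hF
  have hFc : ∀ (e : E) (b : Bool), F (c e) b = wt b * h e b := by
    intro e b
    have hex : ∃ e', c e' = c e := ⟨e, rfl⟩
    have : hex.choose = e := hc hex.choose_spec
    simp [hF, dif_pos hex, this]
  have hFn : ∀ a, a ∉ img → ∀ b, F a b = wt b := by
    intro a ha b
    have : ¬ ∃ e, c e = a := by rwa [hmem] at ha
    simp [hF, dif_neg this]
  have key : ∀ g : A → Bool, ((∏ a, wt (g a)) * ∏ e, h e (g (c e))) = ∏ a, F a (g a) := by
    intro g
    have h1 : ∏ a, F a (g a) = (∏ a, wt (g a)) * ∏ a, (if ha : ∃ e, c e = a then h ha.choose (g a) else 1) := by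
      rw [← Finset.prod_mul_distrib]
    have h2 : ∏ a, (if ha : ∃ e, c e = a then h ha.choose (g a) else 1)
        = ∏ a ∈ img, (if ha : ∃ e, c e = a then h ha.choose (g a) else 1) := by
      refine (Finset.prod_subset (Finset.subset_univ img) ?_).symm
      intro a _ ha
      have : ¬ ∃ e, c e = a := by rwa [hmem] at ha
      simp [dif_neg this]
    have h3 : ∏ a ∈ img, (if ha : ∃ e, c e = a then h ha.choose (g a) else 1)
        = ∏ e, h e (g (c e)) := by
      rw [himg, Finset.prod_image (fun x _ y _ hxy => hc hxy)]
      refine Finset.prod_congr rfl ?_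
      intro e _
      have hex : ∃ e', c e' = c e := ⟨e, rfl⟩
      have he : hex.choose = e := hc hex.choose_spec
      simp [dif_pos hex, he]
    rw [h1, h2, h3]
  simp_rw [key]
  rw [show (∑ g : A → Bool, ∏ a, F a (g a)) = ∏ a, ∑ b, F a b from ?_]
  · -- evaluate the product
    have h4 : ∀ a, ∑ b, F a b = F a true + F a false := fun a => Fintype.sum_bool _
    have h5 : ∏ a, ∑ b, F a b = ∏ a ∈ img, ∑ b, F a b := by
      refine (Finset.prod_subset (Finset.subset_univ img) ?_).symm
      intro a _ ha
      rw [h4 a, hFn a ha, hFn a ha, hw]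
    rw [h5, himg, Finset.prod_image (fun x _ y _ hxy => hc hxy)]
    refine Finset.prod_congr rfl fun e _ => ?_
    rw [h4, hFc, hFc]
  · exact (Fintype.prod_sum fun a b => F a b).symm


variable {n : ℕ} {p : ℝ}

/-- weight of a graph -/
def W (p : ℝ) (G : Fin n → Fin n → Bool) : ℝ := ∏ i, ∏ j, w p (G i j)

lemma W_nonneg (h0 : 0 ≤ p) (h1 : p ≤ 1) (G : Fin n → Fin n → Bool) : 0 ≤ W p G :=
  Finset.prod_nonneg fun i _ => Finset.prod_nonneg fun j _ => w_nonneg h0 h1 _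

lemma master_curried {E : Type*} [Fintype E] [DecidableEq E]
    (c : E → Fin n × Fin n) (hc : Function.Injective c) (h : E → Bool → ℝ) :
    ∑ G : Fin n → Fin n → Bool, (W p G * ∏ e, h e (G (c e).1 (c e).2))
      = ∏ e, (p * h e true + (1 - p) * h e false) := by
  classical
  have hm := master (A := Fin n × Fin n) (E := E) (w p) (w_sum p) c hc h
  rw [w_true, w_false] at hm
  rw [← hm]
  refine (Equiv.sum_comp (Equiv.curry (Fin n) (Fin n) Bool) _).symm.trans ?_
  refine Finset.sum_congr rfl fun g _ => ?_
  have h1 : W p (Equiv.curry (Fin n) (Fin n) Bool g) = ∏ a : Fin n × Fin n, w p (g a) := by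
    rw [W, ← Fintype.prod_prod_type']
    rfl
  have h2 : ∀ e : E, (Equiv.curry (Fin n) (Fin n) Bool g) (c e).1 (c e).2 = g (c e) := by
    intro e; rfl
  simp_rw [h1, h2]

lemma master_pair {E : Type*} [Fintype E] [DecidableEq E]
    (c₁ c₂ : E → Fin n × Fin n) (hc₁ : Function.Injective c₁) (hc₂ : Function.Injective c₂)
    (f : E → Bool → Bool → ℝ) :
    ∑ G : Fin n → Fin n → Bool, ∑ G' : Fin n → Fin n → Bool,
      (W p G * W p G' * ∏ e, f e (G (c₁ e).1 (c₁ e).2) (G' (c₂ e).1 (c₂ e).2))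
      = ∏ e, (p * (p * f e true true + (1 - p) * f e true false)
              + (1 - p) * (p * f e false true + (1 - p) * f e false false)) := by
  classical
  have step1 : ∀ G : Fin n → Fin n → Bool,
      ∑ G' : Fin n → Fin n → Bool,
        (W p G * W p G' * ∏ e, f e (G (c₁ e).1 (c₁ e).2) (G' (c₂ e).1 (c₂ e).2))
      = W p G * ∏ e, (p * f e (G (c₁ e).1 (c₁ e).2) true
                      + (1 - p) * f e (G (c₁ e).1 (c₁ e).2) false) := by
    intro G
    rw [← master_curried c₂ hc₂ (fun e b' => f e (G (c₁ e).1 (c₁ e).2) b'), Finset.mul_sum]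
    exact Finset.sum_congr rfl fun G' _ => by ring
  simp_rw [step1]
  exact master_curried c₁ hc₁ (fun e b => p * f e b true + (1 - p) * f e b false)

section Overlap
variable (n : ℕ) (π : Equiv.Perm (Fin n))

/-- ordered image pair -/
def σp (e : Fin n × Fin n) : Fin n × Fin n :=
  if π e.1 < π e.2 then (π e.1, π e.2) else (π e.2, π e.1)

/-- the set of ordered pairs -/
def P : Finset (Fin n × Fin n) := Finset.univ.filter fun e => e.1 < e.2

lemma overlap_eq (G G' : Fin n → Fin n → Bool) :
    overlap G G' π = ((P n).filter fun e =>
      G e.1 e.2 = true ∧ G' (σp n π e).1 (σp n π e).2 = true).card := by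
  classical
  rw [overlap, show {e : Fin n × Fin n | e.1 < e.2 ∧ G e.1 e.2 = true ∧
      ((π e.1 < π e.2 ∧ G' (π e.1) (π e.2) = true) ∨ (π e.2 < π e.1 ∧ G' (π e.2) (π e.1) = true))}
      = ↑((P n).filter fun e => G e.1 e.2 = true ∧ G' (σp n π e).1 (σp n π e).2 = true) from ?_,
    Set.ncard_coe_finset]
  ext e
  simp only [Set.mem_setOf_eq, Finset.coe_filter, P, Finset.mem_filter, Finset.mem_univ, true_and]
  constructor
  · rintro ⟨hlt, hG, hor⟩
    refine ⟨hlt, hG, ?_⟩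
    rcases hor with ⟨h1, h2⟩ | ⟨h1, h2⟩
    · rw [σp, if_pos h1]; exact h2
    · rw [σp, if_neg (asymm h1)]; exact h2
  · rintro ⟨hlt, hG, hG'⟩
    refine ⟨hlt, hG, ?_⟩
    by_cases h1 : π e.1 < π e.2
    · left; exact ⟨h1, by rwa [σp, if_pos h1] at hG'⟩
    · right
      have hne : π e.1 ≠ π e.2 := fun h => absurd (π.injective h) (ne_of_lt hlt)
      have h1' : π e.2 < π e.1 := lt_of_le_of_ne (not_lt.mp h1) hne.symm
      exact ⟨h1', by rwa [σp, if_neg h1] at hG'⟩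

lemma σp_injOn : ∀ e ∈ P n, ∀ e' ∈ P n, σp n π e = σp n π e' → e = e' := by
  intro e he e' he' h
  simp only [P, Finset.mem_filter] at he he'
  have he2 := he.2; have he2' := he'.2
  unfold σp at h
  by_cases h1 : π e.1 < π e.2 <;> by_cases h2 : π e'.1 < π e'.2
  · rw [if_pos h1, if_pos h2] at h
    have := Prod.mk.injEq (π e.1) (π e.2) (π e'.1) (π e'.2) ▸ h
    exact Prod.ext (π.injective (congrArg Prod.fst h)) (π.injective (congrArg Prod.snd h))
  · rw [if_pos h1, if_neg h2] at h
    have a1 : e.1 = e'.2 := π.injective (congrArg Prod.fst h)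
    have a2 : e.2 = e'.1 := π.injective (congrArg Prod.snd h)
    exact absurd (a1 ▸ a2 ▸ he2) (asymm he2')
  · rw [if_neg h1, if_pos h2] at h
    have a1 : e.2 = e'.1 := π.injective (congrArg Prod.fst h)
    have a2 : e.1 = e'.2 := π.injective (congrArg Prod.snd h)
    exact absurd (a1 ▸ a2 ▸ he2') (asymm he2)
  · rw [if_neg h1, if_neg h2] at h
    exact Prod.ext (π.injective (congrArg Prod.snd h)) (π.injective (congrArg Prod.fst h))

end Overlap

section Teq
variable {n : ℕ} {p : ℝ} (π : Equiv.Perm (Fin n))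

abbrev Epairs (n : ℕ) := {e : Fin n × Fin n // e.1 < e.2}

lemma T_eq (x : ℝ) :
    ∑ G : Fin n → Fin n → Bool, ∑ G' : Fin n → Fin n → Bool,
      (W p G * W p G' * x ^ overlap G G' π)
    = (p ^ 2 * x + (1 - p ^ 2)) ^ (P n).card := by
  classical
  have hpow : ∀ G G' : Fin n → Fin n → Bool,
      (x : ℝ) ^ overlap G G' π = ∏ e : Epairs n,
        (if G e.1.1 e.1.2 = true ∧ G' (σp n π e.1).1 (σp n π e.1).2 = true then x else 1) := by
    intro G G'
    rw [overlap_eq n π G G']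
    rw [← Finset.prod_subtype (P n)
      (fun e => by simp [P]) (fun e => if G e.1 e.2 = true ∧ G' (σp n π e).1 (σp n π e).2 = true then x else 1)]
    rw [Finset.prod_ite, Finset.prod_const, Finset.prod_const, one_pow, mul_one]
  simp_rw [hpow]
  have hc₁ : Function.Injective (fun e : Epairs n => e.1) := Subtype.val_injective
  have hc₂ : Function.Injective (fun e : Epairs n => σp n π e.1) := by
    intro e e' h
    have he : e.1 ∈ P n := by simp [P, e.2]
    have he' : e'.1 ∈ P n := by simp [P, e'.2]
    exact Subtype.ext (σp_injOn n π e.1 he e'.1 he' h)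
  have := master_pair (p := p) (fun e : Epairs n => e.1) (fun e : Epairs n => σp n π e.1)
      hc₁ hc₂ (fun _ b b' => if b = true ∧ b' = true then x else 1)
  rw [this]
  rw [Finset.prod_const]
  have hcard : Fintype.card (Epairs n) = (P n).card := by
    rw [Fintype.card_subtype]; rfl
  rw [← hcard, Finset.card_univ]
  congr 1
  simp only [and_true, and_false, if_true, if_false]
  norm_num
  ring

end Teq

section CardP

lemma card_P (n : ℕ) : 2 * (P n).card = n * n - n := by
  classical
  have hswap : ((P n).image Prod.swap).card = (P n).card :=
    Finset.card_image_of_injective _ Prod.swap_injective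
  have hdisj : Disjoint (P n) ((P n).image Prod.swap) := by
    rw [Finset.disjoint_left]
    intro e he hmem
    simp only [Finset.mem_image] at hmem
    obtain ⟨e', he', hswap'⟩ := hmem
    simp only [P, Finset.mem_filter] at he he'
    rw [← hswap'] at he
    exact absurd he.2 (asymm he'.2)
  have hunion : P n ∪ (P n).image Prod.swap = Finset.univ.filter (fun e : Fin n × Fin n => e.1 ≠ e.2) := by
    ext e
    simp only [Finset.mem_union, Finset.mem_image, P, Finset.mem_filter, Finset.mem_univ, true_and]
    constructor
    · rintro (h | ⟨e', h', rfl⟩)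
      · exact ne_of_lt h
      · exact (ne_of_lt h').symm
    · intro h
      rcases lt_or_gt_of_ne h with h' | h'
      · exact Or.inl h'
      · exact Or.inr ⟨e.swap, h', Prod.swap_swap e⟩
  have hcardne : (Finset.univ.filter (fun e : Fin n × Fin n => e.1 ≠ e.2)).card = n * n - n := by
    have h1 : (Finset.univ.filter (fun e : Fin n × Fin n => e.1 = e.2)).card = n := by
      rw [show (Finset.univ.filter (fun e : Fin n × Fin n => e.1 = e.2))
          = Finset.univ.image (fun i : Fin n => (i, i)) from ?_]
      · rw [Finset.card_image_of_injective _ (fun a b h => (Prod.mk.injEq _ _ _ _ ▸ h).1)]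
        simp
      · ext e
        simp only [Finset.mem_filter, Finset.mem_univ, true_and, Finset.mem_image]
        constructor
        · intro h; exact ⟨e.1, by rw [Prod.ext_iff]; exact ⟨rfl, h⟩⟩
        · rintro ⟨i, rfl⟩; rfl
    have h2 := Finset.card_filter_add_card_filter_not
      (s := (Finset.univ : Finset (Fin n × Fin n))) (p := fun e => e.1 = e.2)
    simp only [Finset.card_univ, Fintype.card_prod, Fintype.card_fin] at h2
    have : (Finset.univ.filter (fun e : Fin n × Fin n => ¬ e.1 = e.2)).card = n * n - n := by
      omega
    convert this using 2
  rw [two_mul,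
    show (P n).card + (P n).card = (P n).card + ((P n).image Prod.swap).card from by rw [hswap],
    ← Finset.card_union_of_disjoint hdisj, hunion, hcardne]

end CardP

section MeasureId
variable {n : ℕ} {p : ℝ}

lemma bern_prob (h0 : 0 ≤ p) (h1 : p ≤ 1) : IsProbabilityMeasure (bernoulliBool p) := by
  constructor
  rw [bernoulliBool]
  simp only [Measure.add_apply, Measure.smul_apply, smul_eq_mul]
  rw [Measure.dirac_apply_of_mem (Set.mem_univ _), Measure.dirac_apply_of_mem (Set.mem_univ _)]
  rw [mul_one, mul_one, ← ENNReal.ofReal_add h0 (by linarith)]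
  norm_num

lemma bern_singleton (b : Bool) : bernoulliBool p {b} = ENNReal.ofReal (w p b) := by
  rw [bernoulliBool]
  simp only [Measure.add_apply, Measure.smul_apply, smul_eq_mul]
  cases b
  · rw [Measure.dirac_apply' _ (measurableSet_singleton _),
        Measure.dirac_apply' _ (measurableSet_singleton _)]
    simp [w]
  · rw [Measure.dirac_apply' _ (measurableSet_singleton _),
        Measure.dirac_apply' _ (measurableSet_singleton _)]
    simp [w]

lemma erMeasure_singleton (h0 : 0 ≤ p) (h1 : p ≤ 1) (G : Fin n → Fin n → Bool) :
    erMeasure n p {G} = ENNReal.ofReal (W p G) := by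
  haveI := bern_prob h0 h1
  rw [erMeasure, ← Set.univ_pi_singleton G, Measure.pi_pi]
  have hrow : ∀ i, (Measure.pi fun _ : Fin n => bernoulliBool p) {G i}
      = ENNReal.ofReal (∏ j, w p (G i j)) := by
    intro i
    rw [← Set.univ_pi_singleton (G i), Measure.pi_pi]
    rw [ENNReal.ofReal_prod_of_nonneg (fun j _ => w_nonneg h0 h1 _)]
    exact Finset.prod_congr rfl fun j _ => bern_singleton _
  simp_rw [hrow]
  rw [W, ENNReal.ofReal_prod_of_nonneg
    (fun i _ => Finset.prod_nonneg fun j _ => w_nonneg h0 h1 _)]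

lemma erPair_prob (h0 : 0 ≤ p) (h1 : p ≤ 1) : IsProbabilityMeasure (erPair n p) := by
  haveI := bern_prob h0 h1
  haveI : IsProbabilityMeasure (erMeasure n p) := by
    rw [erMeasure]; infer_instance
  rw [erPair]; infer_instance

lemma erPair_singleton (h0 : 0 ≤ p) (h1 : p ≤ 1)
    (ω : (Fin n → Fin n → Bool) × (Fin n → Fin n → Bool)) :
    erPair n p {ω} = ENNReal.ofReal (W p ω.1 * W p ω.2) := by
  haveI := bern_prob h0 h1
  haveI : IsProbabilityMeasure (erMeasure n p) := by
    rw [erMeasure]; infer_instance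
  rw [erPair, show ({ω} : Set _) = {ω.1} ×ˢ {ω.2} by simp,
    Measure.prod_prod, erMeasure_singleton h0 h1, erMeasure_singleton h0 h1,
    ← ENNReal.ofReal_mul (W_nonneg h0 h1 _)]

lemma erPair_finset (h0 : 0 ≤ p) (h1 : p ≤ 1)
    (B : Finset ((Fin n → Fin n → Bool) × (Fin n → Fin n → Bool))) :
    erPair n p ↑B = ENNReal.ofReal (∑ ω ∈ B, W p ω.1 * W p ω.2) := by
  classical
  have hB : (↑B : Set _) = ⋃ ω ∈ B, {ω} := by
    ext x; simp
  rw [hB, measure_biUnion_finset ?_ ?_]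
  · rw [ENNReal.ofReal_sum_of_nonneg (fun ω _ =>
      mul_nonneg (W_nonneg h0 h1 _) (W_nonneg h0 h1 _))]
    exact Finset.sum_congr rfl fun ω _ => erPair_singleton h0 h1 ω
  · intro x _ y _ hxy
    simp [Set.disjoint_singleton, hxy]
  · intro ω _
    exact measurableSet_singleton ω

end MeasureId

section Tails
variable {n : ℕ} {p : ℝ} (π : Equiv.Perm (Fin n))

lemma sum_univ_T (x : ℝ) :
    ∑ ω : (Fin n → Fin n → Bool) × (Fin n → Fin n → Bool),
      W p ω.1 * W p ω.2 * x ^ overlap ω.1 ω.2 π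
    = (p ^ 2 * x + (1 - p ^ 2)) ^ (P n).card := by
  rw [Fintype.sum_prod_type]; exact T_eq π x

lemma tail_up (h0 : 0 ≤ p) (h1 : p ≤ 1) (t r : ℝ) (ht : 0 ≤ t) :
    ∑ ω ∈ Finset.univ.filter
        (fun ω : (Fin n → Fin n → Bool) × (Fin n → Fin n → Bool) =>
          r ≤ (overlap ω.1 ω.2 π : ℝ)), W p ω.1 * W p ω.2
    ≤ Real.exp (-(t * r)) * (p ^ 2 * Real.exp t + (1 - p ^ 2)) ^ (P n).card := by
  classical
  have hWp : ∀ ω : (Fin n → Fin n → Bool) × (Fin n → Fin n → Bool),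
      0 ≤ W p ω.1 * W p ω.2 := fun ω => mul_nonneg (W_nonneg h0 h1 _) (W_nonneg h0 h1 _)
  have key : Real.exp (t * r) * (∑ ω ∈ Finset.univ.filter
        (fun ω : (Fin n → Fin n → Bool) × (Fin n → Fin n → Bool) =>
          r ≤ (overlap ω.1 ω.2 π : ℝ)), W p ω.1 * W p ω.2)
      ≤ (p ^ 2 * Real.exp t + (1 - p ^ 2)) ^ (P n).card := by
    rw [← sum_univ_T π (Real.exp t), Finset.mul_sum]
    refine le_trans (Finset.sum_le_sum ?_)
      (Finset.sum_le_sum_of_subset_of_nonneg (Finset.filter_subset _ _)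
        (fun ω _ _ => mul_nonneg (hWp ω) (pow_nonneg (Real.exp_pos t).le _)))
    · intro ω hω
      rw [Finset.mem_filter] at hω
      rw [mul_comm (Real.exp (t * r))]
      refine mul_le_mul_of_nonneg_left ?_ (hWp ω)
      rw [← Real.exp_nat_mul]
      exact Real.exp_le_exp.mpr (by nlinarith [hω.2])
  have h2 := mul_le_mul_of_nonneg_left key (Real.exp_pos (-(t * r))).le
  rwa [← mul_assoc, ← Real.exp_add, neg_add_cancel, Real.exp_zero, one_mul] at h2

lemma tail_down (h0 : 0 ≤ p) (h1 : p ≤ 1) (t r : ℝ) (ht : 0 ≤ t) :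
    ∑ ω ∈ Finset.univ.filter
        (fun ω : (Fin n → Fin n → Bool) × (Fin n → Fin n → Bool) =>
          (overlap ω.1 ω.2 π : ℝ) ≤ r), W p ω.1 * W p ω.2
    ≤ Real.exp (t * r) * (p ^ 2 * Real.exp (-t) + (1 - p ^ 2)) ^ (P n).card := by
  classical
  have hWp : ∀ ω : (Fin n → Fin n → Bool) × (Fin n → Fin n → Bool),
      0 ≤ W p ω.1 * W p ω.2 := fun ω => mul_nonneg (W_nonneg h0 h1 _) (W_nonneg h0 h1 _)
  have key : Real.exp (-(t * r)) * (∑ ω ∈ Finset.univ.filter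
        (fun ω : (Fin n → Fin n → Bool) × (Fin n → Fin n → Bool) =>
          (overlap ω.1 ω.2 π : ℝ) ≤ r), W p ω.1 * W p ω.2)
      ≤ (p ^ 2 * Real.exp (-t) + (1 - p ^ 2)) ^ (P n).card := by
    rw [← sum_univ_T π (Real.exp (-t)), Finset.mul_sum]
    refine le_trans (Finset.sum_le_sum ?_)
      (Finset.sum_le_sum_of_subset_of_nonneg (Finset.filter_subset _ _)
        (fun ω _ _ => mul_nonneg (hWp ω) (pow_nonneg (Real.exp_pos _).le _)))
    · intro ω hω
      rw [Finset.mem_filter] at hω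
      rw [mul_comm (Real.exp (-(t * r)))]
      refine mul_le_mul_of_nonneg_left ?_ (hWp ω)
      rw [← Real.exp_nat_mul]
      exact Real.exp_le_exp.mpr (by nlinarith [hω.2])
  have h2 := mul_le_mul_of_nonneg_left key (Real.exp_pos (t * r)).le
  rwa [← mul_assoc, ← Real.exp_add, add_neg_cancel, Real.exp_zero, one_mul] at h2

lemma base_pow_le {q y : ℝ} (hq0 : 0 ≤ q) (hq1 : q ≤ 1) (hy : 0 ≤ y) (N : ℕ) :
    (q * y + (1 - q)) ^ N ≤ Real.exp ((N : ℝ) * (q * (y - 1))) := by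
  have hb : 0 ≤ q * y + (1 - q) := by nlinarith
  have hle : q * y + (1 - q) ≤ Real.exp (q * (y - 1)) := by
    have := Real.add_one_le_exp (q * (y - 1)); linarith
  calc (q * y + (1 - q)) ^ N ≤ Real.exp (q * (y - 1)) ^ N := pow_le_pow_left₀ hb hle N
    _ = Real.exp ((N : ℝ) * (q * (y - 1))) := by rw [← Real.exp_nat_mul]

lemma exp_quad {t : ℝ} (h0 : 0 ≤ t) (h1 : t ≤ 1) : Real.exp t ≤ 1 + t + t ^ 2 := by
  have hb := Real.exp_bound (x := t) (by rwa [abs_of_nonneg h0]) (n := 2) (by norm_num)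
  norm_num [Finset.sum_range_succ, Nat.factorial, abs_of_nonneg h0] at hb
  rw [abs_le] at hb
  nlinarith [hb.2, sq_nonneg t]

lemma exp_quad_neg {t : ℝ} (h0 : 0 ≤ t) (h1 : t ≤ 1) : Real.exp (-t) ≤ 1 - t + t ^ 2 := by
  have hb := Real.exp_bound (x := -t) (by rwa [abs_neg, abs_of_nonneg h0]) (n := 2) (by norm_num)
  norm_num [Finset.sum_range_succ, Nat.factorial, abs_neg, abs_of_nonneg h0] at hb
  rw [abs_le] at hb
  nlinarith [hb.2, sq_nonneg t]

end Tails

section PermBound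
variable {n : ℕ} {p δ : ℝ}

set_option maxHeartbeats 2000000 in
lemma perm_bound (π : Equiv.Perm (Fin n)) (h0 : 0 ≤ p) (h1 : p ≤ 1) (hδ : 0 < δ)
    (hn : 2 ≤ n) (hdn : 2 ≤ min δ 1 * n) :
    ∑ ω ∈ Finset.univ.filter
        (fun ω : (Fin n → Fin n → Bool) × (Fin n → Fin n → Bool) =>
          ¬ |(overlap ω.1 ω.2 π : ℝ) - (n : ℝ) ^ 2 * p ^ 2 / 2| ≤ δ * ((n : ℝ) ^ 2 * p ^ 2)),
        W p ω.1 * W p ω.2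
    ≤ 2 * Real.exp (-((min δ 1) ^ 2 / 8) * ((n : ℝ) ^ 2 * p ^ 2)) := by
  classical
  set d : ℝ := min δ 1 with hd
  set M : ℝ := (n : ℝ) ^ 2 * p ^ 2 with hM
  have hd0 : 0 < d := lt_min hδ one_pos
  have hd1 : d ≤ 1 := min_le_right _ _
  have hdδ : d ≤ δ := min_le_left _ _
  have hM0 : 0 ≤ M := by positivity
  set t : ℝ := d / 2 with ht
  have ht0 : 0 ≤ t := by positivity
  have ht1 : t ≤ 1 := by rw [ht]; linarith
  set N : ℕ := (P n).card with hN
  have hNr : 2 * (N : ℝ) = (n : ℝ) * (n : ℝ) - (n : ℝ) := by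
    have hc := card_P n
    have hle : n ≤ n * n := Nat.le_mul_of_pos_left n (by omega)
    have : ((2 * N : ℕ) : ℝ) = ((n * n - n : ℕ) : ℝ) := by rw [hc]
    rwa [Nat.cast_mul, Nat.cast_sub hle, Nat.cast_mul, Nat.cast_ofNat] at this
  have hn1 : (1 : ℝ) ≤ (n : ℝ) := by exact_mod_cast Nat.one_le_of_lt hn
  have hWp : ∀ ω : (Fin n → Fin n → Bool) × (Fin n → Fin n → Bool),
      0 ≤ W p ω.1 * W p ω.2 := fun ω => mul_nonneg (W_nonneg h0 h1 _) (W_nonneg h0 h1 _)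
  have hq0 : (0:ℝ) ≤ p ^ 2 := by positivity
  have hq1 : p ^ 2 ≤ 1 := by nlinarith
  set up : Finset ((Fin n → Fin n → Bool) × (Fin n → Fin n → Bool)) :=
    Finset.univ.filter (fun ω => M / 2 + d * M ≤ (overlap ω.1 ω.2 π : ℝ)) with hup
  set dn : Finset ((Fin n → Fin n → Bool) × (Fin n → Fin n → Bool)) :=
    Finset.univ.filter (fun ω => (overlap ω.1 ω.2 π : ℝ) ≤ M / 2 - d * M) with hdn2
  -- containment
  have hsub : Finset.univ.filter
      (fun ω : (Fin n → Fin n → Bool) × (Fin n → Fin n → Bool) =>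
        ¬ |(overlap ω.1 ω.2 π : ℝ) - M / 2| ≤ δ * M) ⊆ up ∪ dn := by
    intro ω hω
    rw [Finset.mem_filter] at hω
    have habs : δ * M < |(overlap ω.1 ω.2 π : ℝ) - M / 2| := not_le.mp hω.2
    have hdM : d * M ≤ δ * M := mul_le_mul_of_nonneg_right hdδ hM0
    rw [Finset.mem_union, hup, hdn2, Finset.mem_filter, Finset.mem_filter]
    rcases abs_cases ((overlap ω.1 ω.2 π : ℝ) - M / 2) with ⟨he, _⟩ | ⟨he, _⟩
    · left; refine ⟨Finset.mem_univ _, ?_⟩; rw [he] at habs; linarith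
    · right; refine ⟨Finset.mem_univ _, ?_⟩; rw [he] at habs; linarith
  -- upper tail
  have hup_bound : ∑ ω ∈ up, W p ω.1 * W p ω.2 ≤ Real.exp (-(d ^ 2 / 8) * M) := by
    have h1' := tail_up π h0 h1 t (M / 2 + d * M) ht0
    have h2' : (p ^ 2 * Real.exp t + (1 - p ^ 2)) ^ N
        ≤ Real.exp ((N : ℝ) * (p ^ 2 * (Real.exp t - 1))) :=
      base_pow_le hq0 hq1 (Real.exp_pos t).le N
    have h3' : Real.exp (-(t * (M / 2 + d * M))) * (p ^ 2 * Real.exp t + (1 - p ^ 2)) ^ N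
        ≤ Real.exp (-(t * (M / 2 + d * M)) + (N : ℝ) * (p ^ 2 * (Real.exp t - 1))) := by
      rw [Real.exp_add]
      exact mul_le_mul_of_nonneg_left h2' (Real.exp_pos _).le
    have hexp : -(t * (M / 2 + d * M)) + (N : ℝ) * (p ^ 2 * (Real.exp t - 1))
        ≤ -(d ^ 2 / 8) * M := by
      have heq : Real.exp t - 1 ≤ t + t ^ 2 := by have := exp_quad ht0 ht1; linarith
      have heq0 : 0 ≤ Real.exp t - 1 := by
        have := Real.add_one_le_exp t; linarith
      have hNp : (N : ℝ) * p ^ 2 ≤ M / 2 := by nlinarith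
      have h4' : (N : ℝ) * (p ^ 2 * (Real.exp t - 1)) ≤ (M / 2) * (t + t ^ 2) := by
        calc (N : ℝ) * (p ^ 2 * (Real.exp t - 1)) = ((N:ℝ) * p ^ 2) * (Real.exp t - 1) := by ring
          _ ≤ (M / 2) * (Real.exp t - 1) := mul_le_mul_of_nonneg_right hNp heq0
          _ ≤ (M / 2) * (t + t ^ 2) := mul_le_mul_of_nonneg_left heq (by linarith)
      have : -(t * (M / 2 + d * M)) + (M / 2) * (t + t ^ 2) ≤ -(d ^ 2 / 8) * M := by
        rw [ht]; nlinarith [hM0, hd0.le]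
      linarith
    calc ∑ ω ∈ up, W p ω.1 * W p ω.2
        ≤ Real.exp (-(t * (M / 2 + d * M))) * (p ^ 2 * Real.exp t + (1 - p ^ 2)) ^ N := h1'
      _ ≤ Real.exp (-(t * (M / 2 + d * M)) + (N : ℝ) * (p ^ 2 * (Real.exp t - 1))) := h3'
      _ ≤ Real.exp (-(d ^ 2 / 8) * M) := Real.exp_le_exp.mpr hexp
  -- lower tail
  have hdn_bound : ∑ ω ∈ dn, W p ω.1 * W p ω.2 ≤ Real.exp (-(d ^ 2 / 8) * M) := by
    have h1' := tail_down π h0 h1 t (M / 2 - d * M) ht0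
    have h2' : (p ^ 2 * Real.exp (-t) + (1 - p ^ 2)) ^ N
        ≤ Real.exp ((N : ℝ) * (p ^ 2 * (Real.exp (-t) - 1))) :=
      base_pow_le hq0 hq1 (Real.exp_pos _).le N
    have h3' : Real.exp (t * (M / 2 - d * M)) * (p ^ 2 * Real.exp (-t) + (1 - p ^ 2)) ^ N
        ≤ Real.exp (t * (M / 2 - d * M) + (N : ℝ) * (p ^ 2 * (Real.exp (-t) - 1))) := by
      rw [Real.exp_add]
      exact mul_le_mul_of_nonneg_left h2' (Real.exp_pos _).le
    have hexp : t * (M / 2 - d * M) + (N : ℝ) * (p ^ 2 * (Real.exp (-t) - 1))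
        ≤ -(d ^ 2 / 8) * M := by
      have heq : Real.exp (-t) - 1 ≤ -t + t ^ 2 := by have := exp_quad_neg ht0 ht1; linarith
      have hN0 : (0:ℝ) ≤ (N : ℝ) * p ^ 2 := by positivity
      have h4' : (N : ℝ) * (p ^ 2 * (Real.exp (-t) - 1)) ≤ ((N:ℝ) * p ^ 2) * (-t + t ^ 2) := by
        calc (N : ℝ) * (p ^ 2 * (Real.exp (-t) - 1)) = ((N:ℝ) * p ^ 2) * (Real.exp (-t) - 1) := by ring
          _ ≤ ((N:ℝ) * p ^ 2) * (-t + t ^ 2) := mul_le_mul_of_nonneg_left heq hN0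
      have hNp : 2 * ((N:ℝ) * p ^ 2) = M - (n : ℝ) * p ^ 2 := by
        rw [hM]; linear_combination p ^ 2 * hNr
      have hnp : (n : ℝ) * p ^ 2 * 2 ≤ d * M := by
        have : ((n:ℝ) * p ^ 2) * 2 ≤ ((n:ℝ) * p ^ 2) * (d * n) := by
          refine mul_le_mul_of_nonneg_left ?_ (by positivity)
          exact hdn
        calc ((n:ℝ) * p ^ 2) * 2 ≤ ((n:ℝ) * p ^ 2) * (d * n) := this
          _ = d * M := by rw [hM]; ring
      have hA : ((N:ℝ) * p ^ 2) * (-t + t ^ 2)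
          ≤ (M / 2) * (-t + t ^ 2) + (d * M / 4) * t := by
        have e1 : ((N:ℝ) * p ^ 2) * (-t + t ^ 2)
            = (M / 2) * (-t + t ^ 2) + ((n:ℝ) * p ^ 2 / 2) * (t - t ^ 2) := by
          linear_combination ((-t + t ^ 2) / 2) * hNp
        rw [e1]
        have e2 : ((n:ℝ) * p ^ 2 / 2) * (t - t ^ 2) ≤ ((n:ℝ) * p ^ 2 / 2) * t := by
          refine mul_le_mul_of_nonneg_left ?_ (by positivity)
          nlinarith [sq_nonneg t]
        have e3 : ((n:ℝ) * p ^ 2 / 2) * t ≤ (d * M / 4) * t := by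
          refine mul_le_mul_of_nonneg_right ?_ ht0
          linarith [hnp]
        linarith
      have hfin2 : t * (M / 2 - d * M) + ((M / 2) * (-t + t ^ 2) + (d * M / 4) * t)
          ≤ -(d ^ 2 / 8) * M := by
        rw [ht]
        have hdM : 0 ≤ d ^ 2 * M := by positivity
        ring_nf
        nlinarith [hdM]
      linarith
    calc ∑ ω ∈ dn, W p ω.1 * W p ω.2
        ≤ Real.exp (t * (M / 2 - d * M)) * (p ^ 2 * Real.exp (-t) + (1 - p ^ 2)) ^ N := h1'
      _ ≤ Real.exp (t * (M / 2 - d * M) + (N : ℝ) * (p ^ 2 * (Real.exp (-t) - 1))) := h3'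
      _ ≤ Real.exp (-(d ^ 2 / 8) * M) := Real.exp_le_exp.mpr hexp
  -- combine
  have hsum : ∑ ω ∈ Finset.univ.filter
      (fun ω : (Fin n → Fin n → Bool) × (Fin n → Fin n → Bool) =>
        ¬ |(overlap ω.1 ω.2 π : ℝ) - M / 2| ≤ δ * M), W p ω.1 * W p ω.2
      ≤ ∑ ω ∈ up, W p ω.1 * W p ω.2 + ∑ ω ∈ dn, W p ω.1 * W p ω.2 := by
    refine le_trans (Finset.sum_le_sum_of_subset_of_nonneg hsub (fun ω _ _ => hWp ω)) ?_
    have := Finset.sum_union_inter (s₁ := up) (s₂ := dn)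
      (f := fun ω : (Fin n → Fin n → Bool) × (Fin n → Fin n → Bool) => W p ω.1 * W p ω.2)
    have hnn : 0 ≤ ∑ ω ∈ up ∩ dn, W p ω.1 * W p ω.2 :=
      Finset.sum_nonneg fun ω _ => hWp ω
    linarith
  calc _ ≤ ∑ ω ∈ up, W p ω.1 * W p ω.2 + ∑ ω ∈ dn, W p ω.1 * W p ω.2 := hsum
    _ ≤ Real.exp (-(d ^ 2 / 8) * M) + Real.exp (-(d ^ 2 / 8) * M) :=
        add_le_add hup_bound hdn_bound
    _ = 2 * Real.exp (-(d ^ 2 / 8) * M) := by ring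

end PermBound

section Assemble

lemma bad_measure_le {n : ℕ} {p δ : ℝ} (h0 : 0 ≤ p) (h1 : p ≤ 1) (hδ : 0 < δ)
    (hn : 2 ≤ n) (hdn : 2 ≤ min δ 1 * n) :
    erPair n p {ω : (Fin n → Fin n → Bool) × (Fin n → Fin n → Bool) |
        ¬ ∀ π : Equiv.Perm (Fin n),
          |(overlap ω.1 ω.2 π : ℝ) - (n : ℝ) ^ 2 * p ^ 2 / 2| ≤ δ * ((n : ℝ) ^ 2 * p ^ 2)}
    ≤ ENNReal.ofReal ((n.factorial : ℝ) *
        (2 * Real.exp (-((min δ 1) ^ 2 / 8) * ((n : ℝ) ^ 2 * p ^ 2)))) := by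
  classical
  have hset : {ω : (Fin n → Fin n → Bool) × (Fin n → Fin n → Bool) |
        ¬ ∀ π : Equiv.Perm (Fin n),
          |(overlap ω.1 ω.2 π : ℝ) - (n : ℝ) ^ 2 * p ^ 2 / 2| ≤ δ * ((n : ℝ) ^ 2 * p ^ 2)}
      = ⋃ π : Equiv.Perm (Fin n), {ω : (Fin n → Fin n → Bool) × (Fin n → Fin n → Bool) |
          ¬ |(overlap ω.1 ω.2 π : ℝ) - (n : ℝ) ^ 2 * p ^ 2 / 2| ≤ δ * ((n : ℝ) ^ 2 * p ^ 2)} := by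
    ext ω
    simp [not_forall]
  rw [hset]
  refine le_trans (measure_iUnion_le _) ?_
  have hπ : ∀ π : Equiv.Perm (Fin n),
      erPair n p {ω : (Fin n → Fin n → Bool) × (Fin n → Fin n → Bool) |
          ¬ |(overlap ω.1 ω.2 π : ℝ) - (n : ℝ) ^ 2 * p ^ 2 / 2| ≤ δ * ((n : ℝ) ^ 2 * p ^ 2)}
      ≤ ENNReal.ofReal (2 * Real.exp (-((min δ 1) ^ 2 / 8) * ((n : ℝ) ^ 2 * p ^ 2))) := by
    intro π
    have hSet2 : {ω : (Fin n → Fin n → Bool) × (Fin n → Fin n → Bool) |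
          ¬ |(overlap ω.1 ω.2 π : ℝ) - (n : ℝ) ^ 2 * p ^ 2 / 2| ≤ δ * ((n : ℝ) ^ 2 * p ^ 2)}
        = ↑(Finset.univ.filter (fun ω : (Fin n → Fin n → Bool) × (Fin n → Fin n → Bool) =>
            ¬ |(overlap ω.1 ω.2 π : ℝ) - (n : ℝ) ^ 2 * p ^ 2 / 2| ≤ δ * ((n : ℝ) ^ 2 * p ^ 2))) := by
      ext ω; simp
    rw [hSet2, erPair_finset h0 h1]
    exact ENNReal.ofReal_le_ofReal (perm_bound π h0 h1 hδ hn hdn)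
  refine le_trans (ENNReal.tsum_le_tsum hπ) ?_
  rw [tsum_fintype]
  rw [Finset.sum_const, Finset.card_univ, Fintype.card_perm, Fintype.card_fin, nsmul_eq_mul]
  rw [ENNReal.ofReal_mul (show (0:ℝ) ≤ (n.factorial : ℝ) by positivity),
    ENNReal.ofReal_natCast]

lemma R_tendsto (c : ℝ) (hc : 0 < c) (α : ℝ) (hα₁ : 0 < α) (hα₂ : α < 1 / 2) :
    Tendsto (fun n : ℕ => (n.factorial : ℝ) *
        (2 * Real.exp (-c * ((n : ℝ) ^ 2 * ((n : ℝ) ^ (-α)) ^ 2)))) atTop (nhds 0) := by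
  set β : ℝ := 2 - 2 * α with hβ
  have hβ1 : 1 < β := by rw [hβ]; linarith
  have hβ0 : 0 < β := by linarith
  -- the real exponent function tends to -infinity
  have hf : Tendsto (fun x : ℝ => x * Real.log x - c * x ^ β) atTop atBot := by
    have hlo : Tendsto (fun x : ℝ => Real.log x / x ^ (β - 1) - c) atTop (nhds (0 - c)) := by
      refine Tendsto.sub_const ?_ c
      exact (isLittleO_log_rpow_atTop (by linarith : 0 < β - 1)).tendsto_div_nhds_zero
    have hpow : Tendsto (fun x : ℝ => x ^ β) atTop atTop := tendsto_rpow_atTop hβ0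
    have hmul : Tendsto (fun x : ℝ => x ^ β * (Real.log x / x ^ (β - 1) - c)) atTop atBot := by
      refine Tendsto.atTop_mul_neg ?_ hpow hlo
      simpa using hc
    refine hmul.congr' ?_
    filter_upwards [eventually_ge_atTop (1 : ℝ)] with x hx
    have hx0 : 0 < x := by linarith
    have hx1 : x ^ β / x ^ (β - 1) = x := by
      have h := (Real.rpow_sub hx0 β (β - 1)).symm
      simpa using h
    have hxb : x ^ β * (Real.log x / x ^ (β - 1)) = x * Real.log x := by
      calc x ^ β * (Real.log x / x ^ (β - 1)) = Real.log x * (x ^ β / x ^ (β - 1)) := by ring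
        _ = Real.log x * x := by rw [hx1]
        _ = x * Real.log x := by ring
    rw [mul_sub, hxb]
    ring
  -- compose with n
  have hfn : Tendsto (fun n : ℕ => (n : ℝ) * Real.log n - c * (n : ℝ) ^ β) atTop atBot :=
    hf.comp tendsto_natCast_atTop_atTop
  have hexp : Tendsto (fun n : ℕ => 2 * Real.exp ((n : ℝ) * Real.log n - c * (n : ℝ) ^ β))
      atTop (nhds 0) := by
    rw [show (0:ℝ) = 2 * 0 by ring]
    exact (Real.tendsto_exp_atBot.comp hfn).const_mul 2
  -- squeeze
  refine tendsto_of_tendsto_of_tendsto_of_le_of_le' tendsto_const_nhds hexp ?_ ?_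
  · filter_upwards with n
    positivity
  · filter_upwards [eventually_ge_atTop 1] with n hn
    have hn0 : (0:ℝ) < (n:ℝ) := by exact_mod_cast hn
    have hfact : (n.factorial : ℝ) ≤ (n:ℝ) ^ (n:ℕ) := by
      exact_mod_cast Nat.factorial_le_pow n
    have hpow_exp : ((n:ℝ)) ^ (n:ℕ) = Real.exp ((n:ℝ) * Real.log n) := by
      rw [← Real.exp_log hn0, ← Real.exp_nat_mul, Real.exp_log hn0]
    have hM : (n : ℝ) ^ 2 * ((n : ℝ) ^ (-α)) ^ 2 = (n:ℝ) ^ β := by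
      rw [← Real.rpow_natCast ((n:ℝ) ^ (-α)) 2, ← Real.rpow_natCast (n:ℝ) 2,
        ← Real.rpow_mul hn0.le, ← Real.rpow_add hn0]
      norm_num
      rw [hβ]; ring_nf
    rw [hM]
    have h2 : -c * (n:ℝ) ^ β = -(c * (n:ℝ) ^ β) := by ring
    calc (n.factorial : ℝ) * (2 * Real.exp (-c * (n:ℝ) ^ β))
        ≤ (n:ℝ) ^ (n:ℕ) * (2 * Real.exp (-c * (n:ℝ) ^ β)) := by
          refine mul_le_mul_of_nonneg_right hfact (by positivity)
      _ = 2 * Real.exp ((n : ℝ) * Real.log n - c * (n : ℝ) ^ β) := by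
          rw [hpow_exp, Real.exp_sub, h2, Real.exp_neg]
          field_simp
      _ ≤ 2 * Real.exp ((n : ℝ) * Real.log n - c * (n : ℝ) ^ β) := le_refl _

end Assemble

end RGM

theorem stmt17 (α : ℝ) (hα₁ : 0 < α) (hα₂ : α < 1 / 2) (δ : ℝ) (hδ : 0 < δ) :
    Tendsto
      (fun n : ℕ =>
        erPair n ((n : ℝ) ^ (-α))
          {ω | ∀ π : Equiv.Perm (Fin n),
            |(overlap ω.1 ω.2 π : ℝ) - (n : ℝ) ^ 2 * ((n : ℝ) ^ (-α)) ^ 2 / 2| ≤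
              δ * ((n : ℝ) ^ 2 * ((n : ℝ) ^ (-α)) ^ 2)})
      atTop (nhds 1) := by
  classical
  set d : ℝ := min δ 1 with hd
  have hd0 : 0 < d := lt_min hδ one_pos
  set R : ℕ → ℝ := fun n => (n.factorial : ℝ) *
    (2 * Real.exp (-(d ^ 2 / 8) * ((n : ℝ) ^ 2 * ((n : ℝ) ^ (-α)) ^ 2))) with hR
  have hR0 : Tendsto R atTop (nhds 0) := RGM.R_tendsto (d ^ 2 / 8) (by positivity) α hα₁ hα₂
  have hlow : Tendsto (fun n => 1 - ENNReal.ofReal (R n)) atTop (nhds 1) := by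
    have h1 : Tendsto (fun n => ENNReal.ofReal (R n)) atTop (nhds 0) := by
      rw [← ENNReal.ofReal_zero]
      exact ENNReal.tendsto_ofReal hR0
    have hcont : Continuous (fun x : ENNReal => 1 - x) :=
      ENNReal.continuous_sub_left (by norm_num)
    have h2 := (hcont.tendsto 0).comp h1
    rw [tsub_zero] at h2
    exact h2
  refine tendsto_of_tendsto_of_tendsto_of_le_of_le' hlow tendsto_const_nhds ?_ ?_
  · -- eventual lower bound
    have hev2 : ∀ᶠ n : ℕ in atTop, 2 ≤ d * n := by
      have ht : Tendsto (fun n : ℕ => d * n) atTop atTop :=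
        Tendsto.const_mul_atTop hd0 tendsto_natCast_atTop_atTop
      exact ht.eventually_ge_atTop 2
    filter_upwards [eventually_ge_atTop 2, hev2] with n hn2 hdn
    set p : ℝ := (n : ℝ) ^ (-α) with hp
    have h0 : 0 ≤ p := Real.rpow_nonneg (Nat.cast_nonneg n) _
    have h1 : p ≤ 1 := Real.rpow_le_one_of_one_le_of_nonpos
      (by exact_mod_cast Nat.one_le_of_lt hn2) (by linarith)
    haveI := RGM.erPair_prob (n := n) h0 h1
    have hbad := RGM.bad_measure_le (n := n) (p := p) (δ := δ) h0 h1 hδ hn2 (by rw [← hd]; exact hdn)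
    have hmeas : MeasurableSet {ω : (Fin n → Fin n → Bool) × (Fin n → Fin n → Bool) |
        ¬ ∀ π : Equiv.Perm (Fin n),
          |(overlap ω.1 ω.2 π : ℝ) - (n : ℝ) ^ 2 * p ^ 2 / 2| ≤ δ * ((n : ℝ) ^ 2 * p ^ 2)} :=
      (Set.toFinite _).measurableSet
    have hcompl : {ω : (Fin n → Fin n → Bool) × (Fin n → Fin n → Bool) |
        ∀ π : Equiv.Perm (Fin n),
          |(overlap ω.1 ω.2 π : ℝ) - (n : ℝ) ^ 2 * p ^ 2 / 2| ≤ δ * ((n : ℝ) ^ 2 * p ^ 2)}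
        = {ω : (Fin n → Fin n → Bool) × (Fin n → Fin n → Bool) |
        ¬ ∀ π : Equiv.Perm (Fin n),
          |(overlap ω.1 ω.2 π : ℝ) - (n : ℝ) ^ 2 * p ^ 2 / 2| ≤ δ * ((n : ℝ) ^ 2 * p ^ 2)}ᶜ := by
      ext ω; simp
    rw [hcompl, prob_compl_eq_one_sub hmeas]
    exact tsub_le_tsub_left hbad 1
  · filter_upwards with n
    have h0 : 0 ≤ (n : ℝ) ^ (-α) := Real.rpow_nonneg (Nat.cast_nonneg n) _
    have h1 : (n : ℝ) ^ (-α) ≤ 1 := by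
      rcases Nat.eq_zero_or_pos n with h | h
      · subst h
        rw [Nat.cast_zero, Real.zero_rpow (by linarith : -α ≠ 0)]
        norm_num
      · exact Real.rpow_le_one_of_one_le_of_nonpos (by exact_mod_cast h) (by linarith)
    haveI := RGM.erPair_prob (n := n) h0 h1
    exact prob_le_one
end
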